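/- arXiv:1104.5297 — 4 statements merged into one kernel-verified Lean document; each statement's English description precedes it below -/
import Mathlib

section
/- For a Pólya urn started with b black and w white balls (b > w ≥ 1), where at each step a ball is drawn uniformly at random and replaced together with an additional ball of the same color, the probability that at some finite time the urn contains equally many black and white balls equals 2·F(1/2), where F is the cumulative distribution function of the Beta(b, w) distribution. -/
open MeasureTheory ProbabilityTheory Filter

/-- The density of the Beta(b,w) distribution. -/
noncomputable def betaDensity (b w : ℕ) (p : ℝ) : ℝ :=
  Real.Gamma (b + w) / (Real.Gamma b * Real.Gamma w) * p ^ (b - 1) * (1 - p) ^ (w - 1)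

/-- The CDF of the Beta(b,w) distribution. -/
noncomputable def betaCDF (b w : ℕ) (x : ℝ) : ℝ :=
  ∫ p in Set.Ioo (0 : ℝ) x, betaDensity b w p

/-- The event that the first draws are exactly the sequence `ε` (`true` = black). -/
def drawsEq {Ω : Type*} (X : ℕ → Ω → Bool) (ε : List Bool) : Set Ω :=
  {ω | List.ofFn (fun i : Fin ε.length => X (i : ℕ) ω) = ε}

/-- `X` is the draw process of a Pólya urn started with `b` black and `w` white balls:
given any history `ε` of draws, the next ball drawn is black with probability
(current number of black balls)/(current total number of balls). -/
def IsPolyaUrn {Ω : Type*} [MeasurableSpace Ω] (P : Measure Ω)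
    (X : ℕ → Ω → Bool) (b w : ℕ) : Prop :=
  (∀ i, Measurable (X i)) ∧
  ∀ ε : List Bool,
    P (drawsEq X (ε ++ [true])) =
      ENNReal.ofReal (((b : ℝ) + ε.count true) / ((b : ℝ) + w + ε.length)) *
        P (drawsEq X ε)

/-- Number of black balls in the urn after `n` draws. -/
def blackCount {Ω : Type*} (X : ℕ → Ω → Bool) (b n : ℕ) (ω : Ω) : ℕ :=
  b + ((Finset.range n).filter fun i => X i ω = true).card

/-- Number of white balls in the urn after `n` draws. -/
def whiteCount {Ω : Type*} (X : ℕ → Ω → Bool) (w n : ℕ) (ω : Ω) : ℕ :=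
  w + ((Finset.range n).filter fun i => X i ω = false).card

/-!
Conditionally on a Beta(b, w)-distributed `p`, the draws are i.i.d. with `P(black) = p`, so a given
sequence of `n` draws containing `k` black balls has probability `∫ p^k (1-p)^(n-k) dBeta(b, w)`.
Write `b = w + d`. No tie occurs among the first `N` draws iff the lead of black, which starts at
`d` and moves by `±1`, stays positive; by the reflection principle there are
`C(N, k) - C(N, k + d)` such draw sequences with `k` black balls. The reflected sequences carry the
weights of the urn with the colours swapped (the urn analogue of the gambler's-ruin factor
`((1-p)/p)^d`), so the probability of no tie by time `N` is
`P_{w,b}(2K ≤ N + d) - P_{b,w}(2K ≤ N - d)` for beta-binomial `K`. By the law of large numbers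
these tend to `F_{w,b}(1/2) = 1 - F_{b,w}(1/2)` and `F_{b,w}(1/2)`.
-/

open Finset Filter Topology

theorem integral_pow_mul_one_sub_pow (m n : ℕ) :
    ∫ x in (0:ℝ)..1, x ^ m * (1 - x) ^ n =
      Real.Gamma (m + 1) * Real.Gamma (n + 1) / Real.Gamma (m + n + 2) := by
  have h := Complex.betaIntegral_eq_Gamma_mul_div (m + 1) (n + 1) (by simp; positivity)
    (by simp; positivity)
  simp only [Complex.betaIntegral, add_sub_cancel_right, Complex.cpow_natCast] at h
  apply Complex.ofReal_injective
  push_cast [← intervalIntegral.integral_ofReal, h, Complex.ofReal_div, Complex.ofReal_mul,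
    ← Complex.Gamma_ofReal]
  ring_nf

section BetaDensity

variable {b w : ℕ}

@[fun_prop]
theorem continuous_betaDensity (b w : ℕ) : Continuous (betaDensity b w) := by
  unfold betaDensity; fun_prop

theorem betaDensity_nonneg (b w : ℕ) {p : ℝ} (hp : p ∈ Set.Icc (0:ℝ) 1) :
    0 ≤ betaDensity b w p := by
  have := hp.1
  have : 0 ≤ 1 - p := sub_nonneg.2 hp.2
  unfold betaDensity
  positivity

theorem betaDensity_one_sub (b w : ℕ) (p : ℝ) :
    betaDensity w b (1 - p) = betaDensity b w p := by
  simp only [betaDensity, sub_sub_cancel, add_comm (w : ℝ), mul_comm (Real.Gamma w)]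
  ring

theorem integral_pow_mul_betaDensity (hb : 1 ≤ b) (hw : 1 ≤ w) (k l : ℕ) :
    ∫ x in (0:ℝ)..1, x ^ k * (1 - x) ^ l * betaDensity b w x =
      Real.Gamma (b + w) / (Real.Gamma b * Real.Gamma w) *
        (Real.Gamma (b + k) * Real.Gamma (w + l) / Real.Gamma (b + w + k + l)) := by
  have hpow : ∀ x : ℝ, x ^ k * (1 - x) ^ l * betaDensity b w x =
      Real.Gamma (b + w) / (Real.Gamma b * Real.Gamma w) *
        (x ^ (b - 1 + k) * (1 - x) ^ (w - 1 + l)) := fun x => by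
    rw [betaDensity, pow_add, pow_add]; ring
  simp_rw [hpow, intervalIntegral.integral_const_mul, integral_pow_mul_one_sub_pow]
  push_cast [Nat.cast_sub hb, Nat.cast_sub hw]
  ring_nf

theorem integral_betaDensity (hb : 1 ≤ b) (hw : 1 ≤ w) :
    ∫ x in (0:ℝ)..1, betaDensity b w x = 1 := by
  have h := integral_pow_mul_betaDensity hb hw 0 0
  simp only [pow_zero, one_mul, CharP.cast_eq_zero, add_zero] at h
  rw [h]
  have := Real.Gamma_pos_of_pos (s := b) (by positivity)
  have := Real.Gamma_pos_of_pos (s := w) (by positivity)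
  have := Real.Gamma_pos_of_pos (s := b + w) (by positivity)
  field_simp

end BetaDensity

section PolyaWeight

variable {b w : ℕ}

/-- The probability that the first `n` draws form any given sequence with `k` black balls. -/
noncomputable def polyaWeight (b w n k : ℕ) : ℝ :=
  ∫ x in (0:ℝ)..1, x ^ k * (1 - x) ^ (n - k) * betaDensity b w x

theorem polyaWeight_nonneg (b w n k : ℕ) : 0 ≤ polyaWeight b w n k :=
  intervalIntegral.integral_nonneg zero_le_one fun x hx => by
    have : 0 ≤ 1 - x := sub_nonneg.2 hx.2
    have := hx.1
    have := betaDensity_nonneg b w hx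
    positivity

theorem polyaWeight_zero (hb : 1 ≤ b) (hw : 1 ≤ w) : polyaWeight b w 0 0 = 1 := by
  simpa [polyaWeight] using integral_betaDensity hb hw

theorem polyaWeight_succ_succ (hb : 1 ≤ b) (hw : 1 ≤ w) {n k : ℕ} (hk : k ≤ n) :
    polyaWeight b w (n + 1) (k + 1) = (b + k) / (b + w + n) * polyaWeight b w n k := by
  have hb' : (0:ℝ) < b := by exact_mod_cast hb
  rw [polyaWeight, polyaWeight, show n + 1 - (k + 1) = n - k by omega,
    integral_pow_mul_betaDensity hb hw, integral_pow_mul_betaDensity hb hw]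
  push_cast [Nat.cast_sub hk]
  have hnum : Real.Gamma (b + (k + 1)) = (b + k) * Real.Gamma (b + k) := by
    rw [← Real.Gamma_add_one (by positivity), add_assoc]
  have hden : Real.Gamma (b + w + (k + 1) + (n - k)) = (b + w + n) * Real.Gamma (b + w + n) := by
    rw [← Real.Gamma_add_one (by positivity)]; ring_nf
  have := Real.Gamma_pos_of_pos (s := b + w + n) (by positivity)
  rw [hnum, hden, show (b : ℝ) + w + k + (n - k) = b + w + n by ring]
  field_simp

theorem polyaWeight_eq_add {n k : ℕ} (hk : k ≤ n) :
    polyaWeight b w n k = polyaWeight b w (n + 1) (k + 1) + polyaWeight b w (n + 1) k := by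
  have hcont : ∀ i j : ℕ, IntervalIntegrable
      (fun x : ℝ => x ^ i * (1 - x) ^ j * betaDensity b w x) volume 0 1 :=
    fun i j => (by fun_prop : Continuous _).intervalIntegrable _ _
  rw [polyaWeight, polyaWeight, polyaWeight, ← intervalIntegral.integral_add (hcont _ _)
    (hcont _ _), show n + 1 - (k + 1) = n - k by omega, show n + 1 - k = n - k + 1 by omega]
  congr 1; ext x; ring

theorem polyaWeight_add_left_swap (hw : 1 ≤ w) {d n k : ℕ} (hk : k + d ≤ n) :
    polyaWeight w (w + d) n (k + d) = polyaWeight (w + d) w n k := by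
  unfold polyaWeight betaDensity
  congr 1; ext x
  rw [show n - k = n - (k + d) + d by omega, show w + d - 1 = w - 1 + d by omega,
    add_comm (w : ℝ), mul_comm (Real.Gamma w)]
  push_cast
  ring

theorem choose_mul_polyaWeight (b w n k : ℕ) :
    n.choose k * polyaWeight b w n k =
      ∫ x in (0:ℝ)..1, (bernsteinPolynomial ℝ n k).eval x * betaDensity b w x := by
  rw [polyaWeight, ← intervalIntegral.integral_const_mul]
  congr 1; ext x
  simp only [bernsteinPolynomial, Polynomial.eval_mul, Polynomial.eval_pow, Polynomial.eval_sub,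
    Polynomial.eval_one, Polynomial.eval_X, Polynomial.eval_natCast]
  ring

theorem sum_choose_mul_polyaWeight (b w n : ℕ) (s : Finset ℕ) :
    ∑ k ∈ s, n.choose k * polyaWeight b w n k =
      ∫ x in (0:ℝ)..1,
        (∑ k ∈ s, (bernsteinPolynomial ℝ n k).eval x) * betaDensity b w x := by
  simp_rw [choose_mul_polyaWeight, Finset.sum_mul]
  rw [intervalIntegral.integral_finsetSum]
  exact fun k _ => (by fun_prop : Continuous _).intervalIntegrable _ _

theorem sum_range_choose_mul_polyaWeight (hb : 1 ≤ b) (hw : 1 ≤ w) (n : ℕ) :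
    ∑ k ∈ range (n + 1), n.choose k * polyaWeight b w n k = 1 := by
  simp_rw [sum_choose_mul_polyaWeight, ← Polynomial.eval_finsetSum, bernsteinPolynomial.sum,
    Polynomial.eval_one, one_mul, integral_betaDensity hb hw]

end PolyaWeight

section Bernstein

variable {x : ℝ}

theorem bernsteinPolynomial_eval_nonneg (hx : x ∈ Set.Icc (0:ℝ) 1) (n k : ℕ) :
    0 ≤ (bernsteinPolynomial ℝ n k).eval x := by
  have : 0 ≤ 1 - x := sub_nonneg.2 hx.2
  have := hx.1
  simp only [bernsteinPolynomial, Polynomial.eval_mul, Polynomial.eval_pow, Polynomial.eval_sub,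
    Polynomial.eval_one, Polynomial.eval_X, Polynomial.eval_natCast]
  positivity

theorem sum_bernsteinPolynomial_eval_le_one (hx : x ∈ Set.Icc (0:ℝ) 1) {n : ℕ}
    {s : Finset ℕ} (hs : s ⊆ range (n + 1)) :
    ∑ k ∈ s, (bernsteinPolynomial ℝ n k).eval x ≤ 1 := by
  calc ∑ k ∈ s, (bernsteinPolynomial ℝ n k).eval x
      ≤ ∑ k ∈ range (n + 1), (bernsteinPolynomial ℝ n k).eval x :=
        sum_le_sum_of_subset_of_nonneg hs fun k _ _ => bernsteinPolynomial_eval_nonneg hx n k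
    _ = 1 := by rw [← Polynomial.eval_finsetSum, bernsteinPolynomial.sum, Polynomial.eval_one]

theorem sum_bernsteinPolynomial_eval_add_sum_not (n : ℕ) (p : ℕ → Prop) [DecidablePred p] :
    ∑ k ∈ (range (n + 1)).filter p, (bernsteinPolynomial ℝ n k).eval x +
      ∑ k ∈ (range (n + 1)).filter (¬ p ·), (bernsteinPolynomial ℝ n k).eval x = 1 := by
  rw [sum_filter_add_sum_filter_not, ← Polynomial.eval_finsetSum, bernsteinPolynomial.sum,
    Polynomial.eval_one]

/-- Chebyshev's inequality for the binomial distribution. -/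
theorem sq_mul_sum_bernsteinPolynomial_eval_le (hx : x ∈ Set.Icc (0:ℝ) 1) {n : ℕ} {ε : ℝ}
    (hε : 0 ≤ ε) {s : Finset ℕ} (hs : s ⊆ range (n + 1))
    (hfar : ∀ k ∈ s, ε ≤ |k - n * x|) :
    ε ^ 2 * ∑ k ∈ s, (bernsteinPolynomial ℝ n k).eval x ≤ n * x * (1 - x) := by
  have hvar := congrArg (Polynomial.eval x) (bernsteinPolynomial.variance ℝ n)
  simp only [Polynomial.eval_finsetSum, Polynomial.eval_mul, Polynomial.eval_pow,
    Polynomial.eval_sub, Polynomial.eval_natCast, Polynomial.eval_X, Polynomial.eval_one,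
    nsmul_eq_mul] at hvar
  rw [← hvar, mul_sum]
  calc ∑ k ∈ s, ε ^ 2 * (bernsteinPolynomial ℝ n k).eval x
      ≤ ∑ k ∈ s, (n * x - k) ^ 2 * (bernsteinPolynomial ℝ n k).eval x := by
        refine sum_le_sum fun k hk => mul_le_mul_of_nonneg_right ?_
          (bernsteinPolynomial_eval_nonneg hx n k)
        rw [← sq_abs ((n : ℝ) * x - k), abs_sub_comm]
        exact pow_le_pow_left₀ hε (hfar k hk) 2
    _ ≤ _ := sum_le_sum_of_subset_of_nonneg hs fun k _ _ =>
        mul_nonneg (sq_nonneg _) (bernsteinPolynomial_eval_nonneg hx n k)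

theorem tendsto_sum_bernsteinPolynomial_eval_of_far (hx : x ∈ Set.Icc (0:ℝ) 1) {δ : ℝ}
    (hδ : 0 < δ) {s : ℕ → Finset ℕ} (hs : ∀ n, s n ⊆ range (n + 1))
    (hfar : ∀ᶠ n in atTop, ∀ k ∈ s n, δ * n ≤ |k - n * x|) :
    Tendsto (fun n => ∑ k ∈ s n, (bernsteinPolynomial ℝ n k).eval x) atTop (𝓝 0) := by
  refine tendsto_of_tendsto_of_tendsto_of_le_of_le' tendsto_const_nhds
    (tendsto_const_div_atTop_nhds_zero_nat (1 / δ ^ 2))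
    (Eventually.of_forall fun n => sum_nonneg fun k _ => bernsteinPolynomial_eval_nonneg hx n k) ?_
  filter_upwards [hfar, eventually_gt_atTop 0] with n hn hn0
  have hn0 : (0:ℝ) < n := by exact_mod_cast hn0
  have h := sq_mul_sum_bernsteinPolynomial_eval_le hx (by positivity) (hs n) hn
  have hx1 : x * (1 - x) ≤ 1 := by nlinarith [hx.1, hx.2]
  rw [div_div, le_div_iff₀ (by positivity)]
  nlinarith

/-- The weak law of large numbers for Bernoulli trials. -/
theorem tendsto_sum_bernsteinPolynomial_eval_two_mul_le (hx : x ∈ Set.Icc (0:ℝ) 1)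
    (hx2 : x ≠ 1 / 2) (c : ℤ) :
    Tendsto (fun n => ∑ k ∈ (range (n + 1)).filter (fun k : ℕ => 2 * (k : ℤ) ≤ n + c),
      (bernsteinPolynomial ℝ n k).eval x) atTop (𝓝 (if x < 1 / 2 then 1 else 0)) := by
  have hlarge : ∀ δ > 0, ∀ᶠ n : ℕ in atTop, |(c : ℝ)| ≤ δ * n := fun δ hδ =>
    (tendsto_natCast_atTop_atTop.const_mul_atTop hδ).eventually_ge_atTop _
  rcases hx2.lt_or_gt with hlt | hgt
  · rw [if_pos hlt]
    have hfar := tendsto_sum_bernsteinPolynomial_eval_of_far hx (δ := (1 / 2 - x) / 2)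
      (by linarith)
      (s := fun n => (range (n + 1)).filter (fun k : ℕ => ¬ 2 * (k : ℤ) ≤ n + c))
      (fun n => filter_subset _ _) ?_
    · rw [← sub_zero (1 : ℝ)]
      exact ((tendsto_const_nhds (x := (1:ℝ))).sub hfar).congr fun n =>
        (eq_sub_of_add_eq (sum_bernsteinPolynomial_eval_add_sum_not n _)).symm
    filter_upwards [hlarge ((1 / 2 - x) / 2) (by linarith)] with n hn k hk
    have hk : (n : ℝ) + c < 2 * k := by
      have := (mem_filter.1 hk).2; push Not at this; exact_mod_cast this
    rw [abs_of_nonneg (by nlinarith [neg_abs_le (c : ℝ)])]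
    nlinarith [neg_abs_le (c : ℝ)]
  · rw [if_neg (by linarith)]
    refine tendsto_sum_bernsteinPolynomial_eval_of_far hx (δ := (x - 1 / 2) / 2) (by linarith)
      (fun n => filter_subset _ _) ?_
    filter_upwards [hlarge ((x - 1 / 2) / 2) (by linarith)] with n hn k hk
    have hk : 2 * (k : ℝ) ≤ n + c := by exact_mod_cast (mem_filter.1 hk).2
    rw [abs_of_nonpos (by nlinarith [le_abs_self (c : ℝ)])]
    nlinarith [le_abs_self (c : ℝ)]

end Bernstein

section Limit

theorem betaCDF_eq_intervalIntegral (b w : ℕ) {x : ℝ} (hx : 0 ≤ x) :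
    betaCDF b w x = ∫ p in (0:ℝ)..x, betaDensity b w p := by
  rw [betaCDF, intervalIntegral.integral_of_le hx, integral_Ioc_eq_integral_Ioo]

theorem betaCDF_half_swap {b w : ℕ} (hb : 1 ≤ b) (hw : 1 ≤ w) :
    betaCDF w b (1 / 2) = 1 - betaCDF b w (1 / 2) := by
  have hint : ∀ x y : ℝ, IntervalIntegrable (betaDensity b w) volume x y :=
    fun x y => (continuous_betaDensity b w).intervalIntegrable x y
  have hsplit := intervalIntegral.integral_add_adjacent_intervals (hint 0 (1 / 2)) (hint (1 / 2) 1)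
  rw [integral_betaDensity hb hw] at hsplit
  rw [betaCDF_eq_intervalIntegral _ _ (by norm_num), betaCDF_eq_intervalIntegral _ _ (by norm_num)]
  simp_rw [← betaDensity_one_sub w b, intervalIntegral.integral_comp_sub_left]
  norm_num
  linarith

/-- Probability that at most `(n + c) / 2` of the first `n` draws are black. -/
noncomputable def polyaLowerTail (b w n : ℕ) (c : ℤ) : ℝ :=
  ∑ k ∈ (range (n + 1)).filter (fun k : ℕ => 2 * (k : ℤ) ≤ n + c),
    n.choose k * polyaWeight b w n k

theorem tendsto_polyaLowerTail (b w : ℕ) (c : ℤ) :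
    Tendsto (fun n => polyaLowerTail b w n c) atTop (𝓝 (betaCDF b w (1 / 2))) := by
  have hcdf : betaCDF b w (1 / 2) =
      ∫ x in (0:ℝ)..1, (if x < 1 / 2 then 1 else 0) * betaDensity b w x := by
    simp_rw [ite_mul, one_mul, zero_mul]
    rw [intervalIntegral.integral_of_le zero_le_one, betaCDF]
    have hind : ∀ x : ℝ, (if x < 1 / 2 then betaDensity b w x else 0) =
        (Set.Iio (1 / 2)).indicator (betaDensity b w) x := fun x => rfl
    simp_rw [hind]
    have hset : Set.Ioc (0:ℝ) 1 ∩ Set.Iio (1 / 2) = Set.Ioo 0 (1 / 2) := by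
      ext x; simp only [Set.mem_inter_iff, Set.mem_Ioc, Set.mem_Iio, Set.mem_Ioo]
      exact ⟨fun h => ⟨h.1.1, h.2⟩, fun h => ⟨⟨h.1, by linarith [h.2]⟩, h.2⟩⟩
    rw [setIntegral_indicator measurableSet_Iio, hset]
  simp_rw [polyaLowerTail, sum_choose_mul_polyaWeight, hcdf]
  refine intervalIntegral.tendsto_integral_filter_of_dominated_convergence (betaDensity b w)
    (Eventually.of_forall fun n => (by fun_prop : Continuous _).aestronglyMeasurable)
    (Eventually.of_forall fun n => Eventually.of_forall fun x hx => ?_)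
    ((continuous_betaDensity b w).intervalIntegrable 0 1) ?_
  · have hx : x ∈ Set.Icc (0:ℝ) 1 := by
      rw [Set.uIoc_of_le zero_le_one] at hx; exact Set.Ioc_subset_Icc_self hx
    rw [Real.norm_of_nonneg (mul_nonneg
      (sum_nonneg fun k _ => bernsteinPolynomial_eval_nonneg hx _ _) (betaDensity_nonneg b w hx))]
    exact mul_le_of_le_one_left (betaDensity_nonneg b w hx)
      (sum_bernsteinPolynomial_eval_le_one hx (filter_subset _ _))
  · filter_upwards [Measure.ae_ne volume (1 / 2 : ℝ)] with x hx2 hx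
    rw [Set.uIoc_of_le zero_le_one] at hx
    exact (tendsto_sum_bernsteinPolynomial_eval_two_mul_le (Set.Ioc_subset_Icc_self hx) hx2
      c).mul_const _

end Limit

section Cylinders

variable {Ω : Type*} {X : ℕ → Ω → Bool}

theorem mem_drawsEq_iff {ω : Ω} {ε : List Bool} :
    ω ∈ drawsEq X ε ↔ ∀ i (hi : i < ε.length), X i ω = ε[i] := by
  simp only [drawsEq, Set.mem_ofPred_eq, List.ext_get_iff, List.length_ofFn, List.get_eq_getElem,
    List.getElem_ofFn, true_and]
  exact ⟨fun h i hi => h i hi hi, fun h i hi _ => h i hi⟩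

theorem drawsEq_nil : drawsEq X [] = Set.univ := by
  ext ω; simp [mem_drawsEq_iff]

theorem drawsEq_append_singleton (ε : List Bool) (v : Bool) :
    drawsEq X (ε ++ [v]) = drawsEq X ε ∩ X ε.length ⁻¹' {v} := by
  ext ω
  simp only [mem_drawsEq_iff, Set.mem_inter_iff, Set.mem_preimage, Set.mem_singleton_iff,
    List.length_append, List.length_singleton, Nat.lt_succ_iff, le_iff_lt_or_eq]
  constructor
  · intro h
    refine ⟨fun i hi => ?_, by simpa using h ε.length (Or.inr rfl)⟩
    simpa [List.getElem_append_left hi] using h i (Or.inl hi)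
  · rintro ⟨h, hlast⟩ i (hi | rfl)
    · simpa [List.getElem_append_left hi] using h i hi
    · simpa using hlast

theorem drawsEq_ofFn {N : ℕ} (f : Fin N → Bool) :
    drawsEq X (List.ofFn f) = {ω | ∀ i : Fin N, X i ω = f i} := by
  ext ω
  simp only [mem_drawsEq_iff, List.length_ofFn, List.getElem_ofFn, Set.mem_ofPred_eq]
  exact ⟨fun h i => h i i.2, fun h i hi => h ⟨i, hi⟩⟩

variable [MeasurableSpace Ω]

theorem measurableSet_drawsEq (hX : ∀ i, Measurable (X i)) (ε : List Bool) :
    MeasurableSet (drawsEq X ε) := by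
  induction ε using List.reverseRecOn with
  | nil => simp [drawsEq_nil]
  | append_singleton ε v ih =>
    rw [drawsEq_append_singleton]
    exact ih.inter (hX _ (measurableSet_singleton v))

theorem IsPolyaUrn.measure_drawsEq {P : Measure Ω} [IsProbabilityMeasure P] {b w : ℕ}
    (hX : IsPolyaUrn P X b w) (hb : 1 ≤ b) (hw : 1 ≤ w) (ε : List Bool) :
    P (drawsEq X ε) = ENNReal.ofReal (polyaWeight b w ε.length (ε.count true)) := by
  induction ε using List.reverseRecOn with
  | nil => simp [drawsEq_nil, polyaWeight_zero hb hw]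
  | append_singleton ε v ih =>
    have hk : ε.count true ≤ ε.length := List.count_le_length
    have htrue : P (drawsEq X (ε ++ [true])) =
        ENNReal.ofReal (polyaWeight b w (ε.length + 1) (ε.count true + 1)) := by
      rw [hX.2, ih, ← ENNReal.ofReal_mul (by positivity), polyaWeight_succ_succ hb hw hk]
    have hsplit : P (drawsEq X (ε ++ [true])) + P (drawsEq X (ε ++ [false])) =
        P (drawsEq X ε) := by
      have hfalse : X ε.length ⁻¹' {false} = (X ε.length ⁻¹' {true})ᶜ := by ext; simp
      rw [drawsEq_append_singleton, drawsEq_append_singleton, hfalse, ← Set.sdiff_eq,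
        measure_inter_add_sdiff _ (hX.1 _ (measurableSet_singleton true))]
    cases v
    · rw [ENNReal.eq_sub_of_add_eq (measure_ne_top P _) ((add_comm _ _).trans hsplit), ih, htrue,
        ← ENNReal.ofReal_sub _ (polyaWeight_nonneg _ _ _ _), polyaWeight_eq_add hk]
      simp
    · simpa using htrue

end Cylinders

section Ballot

def numBlack {N : ℕ} (f : Fin N → Bool) : ℕ := #{i | f i = true}

/-- Black, starting `d` balls ahead, stays strictly ahead of white during the draws `f`
(after `j` draws its lead is `d + 2 * (number of blacks drawn) - j`). -/
def StaysAhead (d : ℕ) : {N : ℕ} → (Fin N → Bool) → Prop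
  | 0, _ => 0 < d
  | N + 1, f => StaysAhead d (Fin.init f) ∧ N + 1 < d + 2 * numBlack f

instance StaysAhead.decidablePred (d : ℕ) : {N : ℕ} → DecidablePred (StaysAhead (N := N) d)
  | 0, _ => inferInstanceAs (Decidable (0 < d))
  | N + 1, _ =>
    haveI := StaysAhead.decidablePred d (N := N)
    inferInstanceAs (Decidable (_ ∧ _))

def ballotCount (d N k : ℕ) : ℕ := #{f : Fin N → Bool | StaysAhead d f ∧ numBlack f = k}

theorem numBlack_snoc {N : ℕ} (f : Fin N → Bool) (v : Bool) :
    numBlack (Fin.snoc f v : Fin (N + 1) → Bool) = numBlack f + v.toNat := by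
  simp only [numBlack, card_filter, Fin.sum_univ_castSucc, Fin.snoc_castSucc, Fin.snoc_last]
  cases v <;> rfl

theorem card_filter_fin_succ_bool {N : ℕ} (p : (Fin (N + 1) → Bool) → Prop)
    [DecidablePred p] :
    #{f | p f} = #{g : Fin N → Bool | p (Fin.snoc g true)} + #{g | p (Fin.snoc g false)} := by
  simp only [card_filter]
  rw [← Fintype.sum_equiv (Fin.snocEquiv fun _ => Bool)
    (fun x => if p (Fin.snoc x.2 x.1) then 1 else 0) _ fun _ => rfl,
    Fintype.sum_prod_type, Fintype.sum_bool]

theorem ballotCount_eq_zero {d N k : ℕ} (h : d + 2 * k ≤ N) : ballotCount d N k = 0 := by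
  rw [ballotCount, card_eq_zero, filter_eq_empty_iff]
  rintro f - ⟨hf, rfl⟩
  cases N with
  | zero => exact absurd hf (by simp [StaysAhead]; omega)
  | succ N => exact absurd hf.2 (by omega)

theorem ballotCount_succ {d N k : ℕ} (h : N + 1 < d + 2 * k) :
    ballotCount d (N + 1) k =
      #{g : Fin N → Bool | StaysAhead d g ∧ numBlack g + 1 = k} + ballotCount d N k := by
  rw [ballotCount, card_filter_fin_succ_bool, ballotCount]
  congr 1 <;> congr 1 <;> ext g <;>
    simp only [mem_filter, mem_univ, true_and, StaysAhead, Fin.init_snoc, numBlack_snoc,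
      Bool.toNat_true, Bool.toNat_false, add_zero] <;>
    exact ⟨fun ⟨⟨hg, _⟩, hk⟩ => ⟨hg, hk⟩, fun ⟨hg, hk⟩ => ⟨⟨hg, by omega⟩, hk⟩⟩

theorem ballotCount_succ_succ {d N k : ℕ} (h : N + 1 < d + 2 * (k + 1)) :
    ballotCount d (N + 1) (k + 1) = ballotCount d N k + ballotCount d N (k + 1) := by
  rw [ballotCount_succ h]
  simp only [ballotCount, Nat.add_right_cancel_iff]

theorem ballotCount_succ_zero {d N : ℕ} (h : N + 1 < d) :
    ballotCount d (N + 1) 0 = ballotCount d N 0 := by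
  simp [ballotCount_succ (k := 0) (by omega)]

theorem ballotCount_zero {d : ℕ} (hd : 0 < d) (k : ℕ) :
    ballotCount d 0 k = if k = 0 then 1 else 0 := by
  have hblack (f : Fin 0 → Bool) : numBlack f = 0 := by simp [numBlack]
  split_ifs with hk
  · simp [ballotCount, StaysAhead, hblack, hd, hk]
  · simp [ballotCount, StaysAhead, hblack, Ne.symm hk]

theorem ballotCount_add_choose {d N k : ℕ} (hd : 0 < d) (h : N < d + 2 * k) :
    ballotCount d N k + N.choose (k + d) = N.choose k := by
  induction N generalizing k with
  | zero =>
    rw [ballotCount_zero hd, Nat.choose_eq_zero_of_lt (by omega : 0 < k + d)]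
    cases k <;> simp
  | succ N ih =>
    rcases k with _ | k
    · rw [ballotCount_succ_zero (by omega), Nat.choose_eq_zero_of_lt (by omega : N + 1 < 0 + d)]
      simpa [Nat.choose_eq_zero_of_lt (by omega : N < d)] using ih (k := 0) (by omega)
    · have hpascal₁ := Nat.choose_succ_succ' N k
      have hpascal₂ := Nat.choose_succ_succ' N (k + d)
      rw [ballotCount_succ_succ h, show k + 1 + d = k + d + 1 by omega]
      have ih₁ := ih (k := k + 1) (by omega)
      rw [show k + 1 + d = k + d + 1 by omega] at ih₁
      rcases Nat.lt_or_ge N (d + 2 * k) with hN | hN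
      · have := ih hN
        omega
      · have hsymm : N.choose (k + d) = N.choose k := by
          rw [← Nat.choose_symm (by omega : k ≤ N), show N - k = k + d by omega]
        have := ballotCount_eq_zero (d := d) (N := N) (k := k) (by omega)
        omega

end Ballot

theorem sum_choose_add_mul_polyaWeight {w d : ℕ} (hw : 1 ≤ w) (N : ℕ) :
    ∑ k ∈ (range (N + 1)).filter (fun k => N < d + 2 * k),
        N.choose (k + d) * polyaWeight (w + d) w N k =
      ∑ j ∈ (range (N + 1)).filter (fun j : ℕ => ¬ 2 * (j : ℤ) ≤ N + d),
        N.choose j * polyaWeight w (w + d) N j := by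
  calc _ = ∑ k ∈ (range (N + 1)).filter (fun k => N < d + 2 * k),
        N.choose (k + d) * polyaWeight w (w + d) N (k + d) := by
        refine sum_congr rfl fun k _ => ?_
        rcases le_or_gt (k + d) N with h | h
        · rw [polyaWeight_add_left_swap hw h]
        · simp [Nat.choose_eq_zero_of_lt h]
    _ = ∑ j ∈ ((range (N + 1)).filter (fun k => N < d + 2 * k)).map (addRightEmbedding d),
        N.choose j * polyaWeight w (w + d) N j := by rw [sum_map]; rfl
    _ = _ := by
      refine (sum_subset (fun j hj => ?_) fun j hj hjB => ?_).symm
      · simp only [mem_filter, mem_range] at hj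
        simp only [Finset.mem_map, mem_filter, mem_range, addRightEmbedding_apply]
        exact ⟨j - d, ⟨by omega, by omega⟩, by omega⟩
      · simp only [Finset.mem_map, mem_filter, mem_range, addRightEmbedding_apply] at hj hjB
        obtain ⟨k, ⟨hkN, hk⟩, rfl⟩ := hj
        rw [Nat.choose_eq_zero_of_lt (by omega), Nat.cast_zero, zero_mul]

theorem sum_ballotCount_mul_polyaWeight {w d : ℕ} (hw : 1 ≤ w) (hd : 0 < d) (N : ℕ) :
    ∑ k ∈ range (N + 1), ballotCount d N k * polyaWeight (w + d) w N k =
      polyaLowerTail w (w + d) N d - polyaLowerTail (w + d) w N (-d) := by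
  set A := (range (N + 1)).filter fun k => N < d + 2 * k
  have hballot : ∑ k ∈ range (N + 1), ballotCount d N k * polyaWeight (w + d) w N k =
      ∑ k ∈ A, (N.choose k - N.choose (k + d) : ℝ) * polyaWeight (w + d) w N k := by
    rw [sum_filter]
    refine sum_congr rfl fun k _ => ?_
    split_ifs with hk
    · rw [← ballotCount_add_choose hd hk]
      push_cast; ring
    · rw [ballotCount_eq_zero (by omega)]
      simp
  have hfirst : ∑ k ∈ A, N.choose k * polyaWeight (w + d) w N k =
      1 - polyaLowerTail (w + d) w N (-d) := by
    have htotal := sum_range_choose_mul_polyaWeight (b := w + d) (by omega) hw N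
    rw [← sum_filter_add_sum_filter_not _ (fun k : ℕ => 2 * (k : ℤ) ≤ N + -d)] at htotal
    rw [polyaLowerTail, ← htotal, add_sub_cancel_left]
    congr 1
    exact filter_congr fun k _ => by omega
  have hsecond : ∑ k ∈ A, N.choose (k + d) * polyaWeight (w + d) w N k =
      1 - polyaLowerTail w (w + d) N d := by
    have htotal := sum_range_choose_mul_polyaWeight hw (b := w) (w := w + d) (by omega) N
    rw [← sum_filter_add_sum_filter_not _ (fun k : ℕ => 2 * (k : ℤ) ≤ N + d)] at htotal
    rw [polyaLowerTail, ← htotal, add_sub_cancel_left, sum_choose_add_mul_polyaWeight hw]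
  rw [hballot]
  simp only [sub_mul, sum_sub_distrib, hfirst, hsecond]
  ring

section Tie

theorem forall_lt_of_forall_ne {a : ℕ → ℕ} (ha : Monotone a) (h0 : 0 < a 0) {N : ℕ}
    (h : ∀ n ≤ N, a n ≠ n) : ∀ n ≤ N, n < a n := by
  intro n hn
  induction n with
  | zero => exact h0
  | succ n ih =>
    have := ih (by omega)
    have := ha (Nat.le_add_right n 1)
    have := h (n + 1) hn
    omega

variable {Ω : Type*} {X : ℕ → Ω → Bool}

theorem count_ofFn_eq_numBlack {N : ℕ} (f : Fin N → Bool) :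
    (List.ofFn f).count true = numBlack f := by
  induction N with
  | zero => simp [numBlack]
  | succ N ih =>
    conv_rhs => rw [← Fin.snoc_init_self f]
    rw [numBlack_snoc, List.ofFn_succ', List.concat_eq_append, List.count_append, ← ih]
    cases f (Fin.last N) <;> rfl

theorem numBlack_le {N : ℕ} (f : Fin N → Bool) : numBlack f ≤ N :=
  (card_filter_le _ _).trans_eq (card_fin N)

theorem numBlack_seq (s : ℕ → Bool) (n : ℕ) :
    numBlack (fun i : Fin n => s i) = #{i ∈ range n | s i = true} := by
  simp only [numBlack, card_filter]
  exact Fin.sum_univ_eq_sum_range (fun i => if s i = true then 1 else 0) n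

theorem staysAhead_seq_iff (s : ℕ → Bool) (d N : ℕ) :
    StaysAhead d (fun i : Fin N => s i) ↔
      ∀ n ≤ N, n < d + 2 * #{i ∈ range n | s i = true} := by
  induction N with
  | zero => simp [StaysAhead]
  | succ N ih =>
    change StaysAhead d (fun i : Fin N => s i) ∧ _ ↔ _
    rw [ih, numBlack_seq]
    exact ⟨fun ⟨h, hN⟩ n hn => (Nat.le_succ_iff.1 hn).elim (h n) (fun e => e ▸ hN),
      fun h => ⟨fun n hn => h n (hn.trans N.le_succ), h _ le_rfl⟩⟩

theorem forall_le_blackCount_ne_iff_staysAhead {w d N : ℕ} (hd : 0 < d) (ω : Ω) :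
    (∀ n ≤ N, blackCount X (w + d) n ω ≠ whiteCount X w n ω) ↔
      StaysAhead d (fun i : Fin N => X i ω) := by
  have htie (n : ℕ) : blackCount X (w + d) n ω = whiteCount X w n ω ↔
      d + 2 * #{i ∈ range n | X i ω = true} = n := by
    have := card_filter_add_card_filter_not (s := range n) (fun i => X i ω = true)
    simp only [Bool.not_eq_true, card_range] at this
    simp only [blackCount, whiteCount]
    omega
  rw [staysAhead_seq_iff (fun i => X i ω)]
  constructor
  · refine fun h => forall_lt_of_forall_ne (fun m n hmn => ?_) (by simpa using hd)
      fun n hn e => h n hn ((htie n).2 e)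
    gcongr
  · intro h n hn e
    have := h n hn
    rw [htie] at e
    omega

theorem setOf_forall_le_blackCount_ne_eq_biUnion {w d N : ℕ} (hd : 0 < d) :
    {ω : Ω | ∀ n ≤ N, blackCount X (w + d) n ω ≠ whiteCount X w n ω} =
      ⋃ f ∈ ({f | StaysAhead d f} : Finset (Fin N → Bool)), drawsEq X (List.ofFn f) := by
  ext ω
  simp only [Set.mem_ofPred_eq, forall_le_blackCount_ne_iff_staysAhead hd, Set.mem_iUnion,
    mem_filter, mem_univ, true_and, drawsEq_ofFn, exists_prop]
  exact ⟨fun h => ⟨_, h, fun _ => rfl⟩, fun ⟨f, hf, hXf⟩ => (funext hXf : _ = f) ▸ hf⟩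

variable [MeasurableSpace Ω] {P : Measure Ω} [IsProbabilityMeasure P]

theorem IsPolyaUrn.measure_forall_le_blackCount_ne {w d : ℕ} (hX : IsPolyaUrn P X (w + d) w)
    (hw : 1 ≤ w) (hd : 0 < d) (N : ℕ) :
    P {ω | ∀ n ≤ N, blackCount X (w + d) n ω ≠ whiteCount X w n ω} =
      ENNReal.ofReal (∑ k ∈ range (N + 1), ballotCount d N k * polyaWeight (w + d) w N k) := by
  rw [setOf_forall_le_blackCount_ne_eq_biUnion hd, measure_biUnion_finset]
  · simp_rw [hX.measure_drawsEq (by omega) hw, List.length_ofFn, count_ofFn_eq_numBlack]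
    rw [← ENNReal.ofReal_sum_of_nonneg fun _ _ => polyaWeight_nonneg _ _ _ _,
      ← sum_fiberwise_of_maps_to (g := numBlack) (t := range (N + 1))
        fun f _ => mem_range.2 (Nat.lt_succ_of_le (numBlack_le f))]
    congr 1
    refine sum_congr rfl fun k _ => ?_
    rw [sum_congr rfl fun f hf => by rw [(mem_filter.1 hf).2], sum_const, nsmul_eq_mul,
      filter_filter, ballotCount]
  · intro f _ g _ hfg
    simp only [Function.onFun, drawsEq_ofFn]
    exact Set.disjoint_left.2 fun ω hf hg => hfg (funext fun i => (hf i).symm.trans (hg i))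
  · exact fun f _ => measurableSet_drawsEq hX.1 _

theorem IsPolyaUrn.measure_exists_le_blackCount_eq {w d : ℕ} (hX : IsPolyaUrn P X (w + d) w)
    (hw : 1 ≤ w) (hd : 0 < d) (N : ℕ) :
    P {ω | ∃ n ≤ N, blackCount X (w + d) n ω = whiteCount X w n ω} =
      ENNReal.ofReal (1 - (polyaLowerTail w (w + d) N d - polyaLowerTail (w + d) w N (-d))) := by
  have hcompl : {ω | ∃ n ≤ N, blackCount X (w + d) n ω = whiteCount X w n ω} =
      {ω | ∀ n ≤ N, blackCount X (w + d) n ω ≠ whiteCount X w n ω}ᶜ := by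
    ext; simp
  have hmeas :
      MeasurableSet {ω | ∀ n ≤ N, blackCount X (w + d) n ω ≠ whiteCount X w n ω} := by
    rw [setOf_forall_le_blackCount_ne_eq_biUnion hd]
    exact Finset.measurableSet_biUnion _ fun f _ => measurableSet_drawsEq hX.1 _
  rw [hcompl, prob_compl_eq_one_sub hmeas, hX.measure_forall_le_blackCount_ne hw hd,
    ← ENNReal.ofReal_one, ← ENNReal.ofReal_sub _ (sum_nonneg fun k _ => by
      have := polyaWeight_nonneg (w + d) w N k; positivity),
    sum_ballotCount_mul_polyaWeight hw hd]

end Tie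

/-- The probability that a Pólya urn started with `b > w ≥ 1` black/white balls ever
contains equally many black and white balls is `2·F^Beta_{b,w}(1/2)`. -/
theorem polya_equalization_prob {Ω : Type*} [MeasurableSpace Ω] (P : Measure Ω)
    [IsProbabilityMeasure P] (X : ℕ → Ω → Bool) (b w : ℕ)
    (hbw : b > w) (hw : 1 ≤ w) (hX : IsPolyaUrn P X b w) :
    P {ω | ∃ n, blackCount X b n ω = whiteCount X w n ω} =
      ENNReal.ofReal (2 * betaCDF b w (1 / 2)) := by
  obtain ⟨d, rfl⟩ : ∃ d, b = w + d := ⟨b - w, by omega⟩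
  have hd : 0 < d := by omega
  have hlim : Tendsto (fun N => 1 - (polyaLowerTail w (w + d) N d -
      polyaLowerTail (w + d) w N (-d))) atTop (𝓝 (2 * betaCDF (w + d) w (1 / 2))) := by
    have := ((tendsto_polyaLowerTail w (w + d) d).sub
      (tendsto_polyaLowerTail (w + d) w (-d))).const_sub 1
    rwa [betaCDF_half_swap (by omega) hw, sub_sub, sub_sub_cancel, ← two_mul] at this
  have hunion : {ω | ∃ n, blackCount X (w + d) n ω = whiteCount X w n ω} =
      ⋃ N, {ω | ∃ n ≤ N, blackCount X (w + d) n ω = whiteCount X w n ω} := by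
    ext ω
    simp only [Set.mem_ofPred_eq, Set.mem_iUnion]
    exact ⟨fun ⟨n, h⟩ => ⟨n, n, le_rfl, h⟩, fun ⟨_, n, _, h⟩ => ⟨n, h⟩⟩
  rw [hunion]
  refine tendsto_nhds_unique (tendsto_measure_iUnion_atTop fun M N hMN ω ⟨n, hn, h⟩ =>
    ⟨n, hn.trans hMN, h⟩) ?_
  convert ENNReal.tendsto_ofReal hlim with N
  exact hX.measure_exists_le_blackCount_eq hw hd N
end

section
/- For a Pólya urn started with b black and w white balls (b > w ≥ 1), the probability that the number of black and white balls is ever equal is (1/2^{b+w-2}) · Σ_{j=0}^{w-1} C(b+w-1, j). -/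
open MeasureTheory ProbabilityTheory Filter

namespace PolyaAux
open Finset


/-- choose with integer index, 0 for negatives -/
def ch (N : ℕ) (j : ℤ) : ℕ := if j < 0 then 0 else N.choose j.toNat

lemma ch_pascal (N : ℕ) (j : ℤ) : ch (N + 1) j = ch N j + ch N (j - 1) := by
  unfold ch
  rcases lt_trichotomy j 0 with h | h | h
  · simp [h, show j - 1 < 0 by omega]
  · subst h; simp
  · have h1 : ¬ (j < 0) := by omega
    have h2 : ¬ (j - 1 < 0) := by omega
    simp only [h1, h2, if_false]
    have : j.toNat = (j-1).toNat + 1 := by omega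
    rw [this, Nat.choose_succ_succ']
    omega

lemma ch_le_middle (N : ℕ) (j : ℤ) : ch N j ≤ N.choose (N / 2) := by
  unfold ch
  split
  · exact Nat.zero_le _
  · exact Nat.choose_le_middle _ _

/-- ballot-type upper bound function -/
noncomputable def FF (N d : ℕ) : ℕ :=
  ∑ j ∈ Finset.Icc ((((N + d - 1) / 2 : ℕ) : ℤ) - d + 1) (((N + d - 1) / 2 : ℕ) : ℤ), ch N j

lemma FF_zero (N : ℕ) : FF N 0 = 0 := by
  unfold FF
  rw [Finset.Icc_eq_empty (by omega), Finset.sum_empty]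

lemma FF_le (N d : ℕ) : FF N d ≤ d * N.choose (N / 2) := by
  unfold FF
  calc ∑ j ∈ Finset.Icc ((((N + d - 1) / 2 : ℕ) : ℤ) - d + 1) (((N + d - 1) / 2 : ℕ) : ℤ), ch N j
      ≤ ∑ _j ∈ Finset.Icc ((((N + d - 1) / 2 : ℕ) : ℤ) - d + 1) (((N + d - 1) / 2 : ℕ) : ℤ),
        N.choose (N / 2) := Finset.sum_le_sum fun j _ => ch_le_middle N j
    _ = ((Finset.Icc ((((N + d - 1) / 2 : ℕ) : ℤ) - d + 1) (((N + d - 1) / 2 : ℕ) : ℤ)).card)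
        * N.choose (N / 2) := by rw [Finset.sum_const, smul_eq_mul]
    _ ≤ d * N.choose (N / 2) := by
        apply Nat.mul_le_mul_right
        rw [Int.card_Icc]
        simp only [Int.toNat_le]
        push_cast; omega

lemma FF_one_pos (d : ℕ) (hd : 1 ≤ d) : 1 ≤ FF 0 d := by
  unfold FF
  have h0 : (0 : ℤ) ∈ Finset.Icc ((((0 + d - 1) / 2 : ℕ) : ℤ) - d + 1) (((0 + d - 1) / 2 : ℕ) : ℤ) := by
    simp only [Finset.mem_Icc]
    constructor <;> [skip; positivity] <;> push_cast <;> omega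
  have : ch 0 0 = 1 := by simp [ch]
  calc 1 = ch 0 0 := this.symm
    _ ≤ _ := Finset.single_le_sum (f := fun j => ch 0 j) (fun _ _ => Nat.zero_le _) h0

lemma FF_rec (N d : ℕ) (hd : 1 ≤ d) : FF (N + 1) d = FF N (d + 1) + FF N (d - 1) := by
  have hK : ((N + 1 + d - 1) / 2 : ℕ) = ((N + (d+1) - 1) / 2 : ℕ) := by omega
  set K : ℤ := (((N + d) / 2 : ℕ) : ℤ) with hKdef
  have hKe : ((N + 1 + d - 1) / 2 : ℕ) = ((N + d) / 2 : ℕ) := by omega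
  have hKe2 : ((N + (d+1) - 1) / 2 : ℕ) = ((N + d) / 2 : ℕ) := by omega
  have step1 : FF (N+1) d = ∑ j ∈ Finset.Icc (K - d + 1) K, (ch N j + ch N (j-1)) := by
    unfold FF
    rw [hKe]
    exact Finset.sum_congr rfl fun j _ => ch_pascal N j
  rw [step1, Finset.sum_add_distrib]
  have hshift : ∑ j ∈ Finset.Icc (K - d + 1) K, ch N (j - 1)
      = ∑ j ∈ Finset.Icc (K - d) (K - 1), ch N j := by
    apply Finset.sum_nbij' (fun j => j - 1) (fun j => j + 1)
    · intro a ha; simp only [Finset.mem_Icc] at *; omega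
    · intro a ha; simp only [Finset.mem_Icc] at *; omega
    · intro a _; omega
    · intro a _; omega
    · intro a _; rfl
  rw [hshift]
  -- FF N (d+1) = Icc (K-d) K = Icc (K-d) (K-1) + ch N K
  have e1 : FF N (d+1) = (∑ j ∈ Finset.Icc (K - d) (K - 1), ch N j) + ch N K := by
    unfold FF
    rw [hKe2]
    have : (Finset.Icc (K - ((d+1 : ℕ) : ℤ) + 1) K) = insert K (Finset.Icc (K - d) (K - 1)) := by
      ext j; simp only [Finset.mem_insert, Finset.mem_Icc]; omega
    rw [this, Finset.sum_insert (by simp only [Finset.mem_Icc]; omega)]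
    omega
  -- FF N (d-1) = Icc (K-d+2 ... ) : for d ≥ 1, equals sum over Icc (K-d+1) (K-1)
  have e2 : FF N (d-1) = ∑ j ∈ Finset.Icc (K - d + 1) (K - 1), ch N j := by
    unfold FF
    rcases Nat.eq_or_lt_of_le hd with h1 | h2
    · -- d = 1 : both empty
      rw [← h1]
      simp only [Nat.sub_self]
      rw [Finset.Icc_eq_empty (by omega), Finset.Icc_eq_empty (by omega)]
    · have : ((N + (d-1) - 1) / 2 : ℕ) = ((N + d) / 2 : ℕ) - 1 := by omega
      rw [this]
      apply Finset.sum_congr _ fun _ _ => rfl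
      have hpos : 1 ≤ (N + d) / 2 := by omega
      congr 1 <;> push_cast <;> omega
  have e3 : (∑ j ∈ Finset.Icc (K - d + 1) K, ch N j)
      = (∑ j ∈ Finset.Icc (K - d + 1) (K - 1), ch N j) + ch N K := by
    have : (Finset.Icc (K - d + 1) K) = insert K (Finset.Icc (K - d + 1) (K - 1)) := by
      ext j; simp only [Finset.mem_insert, Finset.mem_Icc]; omega
    rw [this, Finset.sum_insert (by simp only [Finset.mem_Icc]; omega)]
    ring
  rw [e1, e2, e3]
  ring



-- A4: ∑_{j<W+1} C(n+1,j) + C(n,W) = 2 ∑_{j<W+1} C(n,j)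
lemma sum_choose_succ_row (n : ℕ) : ∀ W : ℕ,
    (∑ j ∈ range (W+1), (n+1).choose j) + n.choose W = 2 * ∑ j ∈ range (W+1), n.choose j := by
  intro W
  induction W with
  | zero => simp
  | succ v ih =>
    rw [Finset.sum_range_succ, Finset.sum_range_succ (f := fun j => n.choose j)]
    have hp : (n+1).choose (v+1) = n.choose v + n.choose (v+1) := Nat.choose_succ_succ n v
    omega

-- A5 variant : (n+1) * C(n, v) = (v+1) * C(n+1, v+1)
lemma succ_mul_choose' (n v : ℕ) : (n+1) * n.choose v = (v+1) * (n+1).choose (v+1) := by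
  rw [Nat.add_one_mul_choose_eq]
  have : Nat.succ n = n + 1 := rfl
  ring

-- nat harmonic identity
lemma nat_harmonic (B W k : ℕ) (hn : B + W = k + 3) :
    (k+3) * (2 * ∑ j ∈ range W, (k+2).choose j)
      = B * (∑ j ∈ range W, (k+3).choose j) + W * (∑ j ∈ range (W+1), (k+3).choose j) := by
  rcases W with _ | v
  · simp
  · have h4 := sum_choose_succ_row (k+2) v
    have h5 := succ_mul_choose' (k+2) v
    set X := ∑ j ∈ range (v+1), (k+3).choose j with hX
    set Y := ∑ j ∈ range (v+1), (k+2).choose j with hY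
    have hXr : ∑ j ∈ range (v+1+1), (k+3).choose j = X + (k+3).choose (v+1) :=
      Finset.sum_range_succ _ _
    rw [hXr]
    have hB : B = k + 2 - v := by omega
    have hBle : v ≤ k + 2 := by omega
    -- h4 : X + (k+2).choose v = 2 * Y
    -- h5 : (k+3) * (k+2).choose v = (v+1) * (k+3).choose (v+1)
    -- goal : (k+3) * (2*Y) = B * X + (v+1) * (X + (k+3).choose (v+1))
    have key : (k+3) * (2*Y) = (k+3) * X + (v+1) * (k+3).choose (v+1) := by
      calc (k+3) * (2*Y) = (k+3) * (X + (k+2).choose v) := by rw [h4]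
        _ = (k+3) * X + (k+3) * (k+2).choose v := by ring
        _ = (k+3) * X + (v+1) * (k+3).choose (v+1) := by rw [h5]
    calc (k+3) * (2 * ∑ j ∈ range (v+1), (k+2).choose j) = (k+3) * (2*Y) := rfl
      _ = (k+3) * X + (v+1) * (k+3).choose (v+1) := key
      _ = B * X + (v+1) * X + (v+1) * (k+3).choose (v+1) := by
          have : k + 3 = B + (v+1) := by omega
          rw [this]; ring
      _ = B * X + (v+1) * (X + (k+3).choose (v+1)) := by ring

-- monotonicity of choose up to half
lemma choose_mono_half (M : ℕ) : ∀ (W j : ℕ), j ≤ W → 2 * W ≤ M + 1 →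
    M.choose j ≤ M.choose W := by
  intro W
  induction W with
  | zero => intro j hj _; interval_cases j; rfl
  | succ v ih =>
    intro j hj hW
    rcases Nat.eq_or_lt_of_le hj with h1 | h2
    · rw [h1]
    · have hj' : j ≤ v := by omega
      have step : M.choose v ≤ M.choose (v+1) := by
        rcases Nat.lt_or_ge (v) (M/2) with h | h
        · exact Nat.choose_le_succ_of_lt_half_left h
        · -- 2(v+1) ≤ M+1 and v ≥ M/2 forces M = 2v+1, equality by symmetry
          have hM : M = 2*v + 1 := by omega
          subst hM
          have : (2*v+1).choose (v+1) = (2*v+1).choose v := by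
            rw [← Nat.choose_symm (by omega : v + 1 ≤ 2*v+1)]
            congr 1; omega
          omega
      exact le_trans (ih j hj' (by omega)) step

lemma sum_choose_le (M W : ℕ) (h : 2 * W ≤ M + 1) :
    (∑ j ∈ range W, M.choose j) ≤ W * M.choose W := by
  calc (∑ j ∈ range W, M.choose j) ≤ ∑ _j ∈ range W, M.choose W :=
        Finset.sum_le_sum fun j hj => choose_mono_half M W j
          (le_of_lt (Finset.mem_range.1 hj)) h
    _ = W * M.choose W := by rw [Finset.sum_const, Finset.card_range, smul_eq_mul]

-- A8
lemma central_step (n : ℕ) : (2*n+2).choose (n+1) * (n+1) = 2 * ((2*n+1) * (2*n).choose n) := by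
  have h1 : (2*n+2).choose (n+1) = (2*n+1).choose n + (2*n+1).choose (n+1) :=
    Nat.choose_succ_succ _ _
  have h2 : (2*n+1).choose n = (2*n+1).choose (n+1) := by
    rw [← Nat.choose_symm (by omega : n + 1 ≤ 2*n+1)]
    congr 1; omega
  have h3 : (2*n+1) * (2*n).choose n = (2*n+1).choose (n+1) * (n+1) := by
    have := Nat.add_one_mul_choose_eq (2*n) n
    simpa using this
  calc (2*n+2).choose (n+1) * (n+1) = 2 * ((2*n+1).choose (n+1) * (n+1)) := by
        rw [h1, h2]; ring
    _ = 2 * ((2*n+1) * (2*n).choose n) := by rw [h3]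

lemma central_sq_even : ∀ n : ℕ, (2*n+1) * ((2*n).choose n)^2 ≤ 16^n := by
  intro n
  induction n with
  | zero => simp
  | succ m ih =>
    have h8 := central_step m
    have key : ((2*m+3) * ((2*m+2).choose (m+1))^2) * (m+1)^2
        = 4 * ((2*m+3)*(2*m+1)) * ((2*m+1) * ((2*m).choose m)^2) := by
      have : ((2*m+2).choose (m+1) * (m+1))^2 = 4 * ((2*m+1)^2 * ((2*m).choose m)^2) := by
        rw [h8]; ring
      nlinarith [this]
    have hle : ((2*m+3) * ((2*m+2).choose (m+1))^2) * (m+1)^2 ≤ 16^(m+1) * (m+1)^2 := by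
      rw [key]
      calc 4 * ((2*m+3)*(2*m+1)) * ((2*m+1) * ((2*m).choose m)^2)
          ≤ 4 * ((2*m+3)*(2*m+1)) * 16^m := Nat.mul_le_mul_left _ ih
        _ ≤ 4 * ((2*m+2)*(2*m+2)) * 16^m := by
            apply Nat.mul_le_mul_right
            apply Nat.mul_le_mul_left
            nlinarith
        _ = 16^(m+1) * (m+1)^2 := by ring
    have hmul : 2*(m+1) = 2*m+2 := by ring
    rw [show 2*(m+1)+1 = 2*m+3 by ring, hmul]
    exact Nat.le_of_mul_le_mul_right hle (by positivity)

lemma central_sq (N : ℕ) : (N+1) * (N.choose (N/2))^2 ≤ 4^N := by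
  rcases Nat.even_or_odd N with ⟨n, hn⟩ | ⟨n, hn⟩
  · subst hn
    have : n + n = 2 * n := by ring
    rw [this]
    have hdiv : (2*n)/2 = n := by omega
    rw [hdiv]
    calc (2*n+1) * ((2*n).choose n)^2 ≤ 16^n := central_sq_even n
      _ = 4^(2*n) := by rw [show (16:ℕ) = 4^2 by norm_num, ← pow_mul]
  · subst hn
    have hdiv : (2*n+1)/2 = n := by omega
    rw [hdiv]
    have h2 : (2*n+2).choose (n+1) = 2 * (2*n+1).choose n := by
      have h1 : (2*n+2).choose (n+1) = (2*n+1).choose n + (2*n+1).choose (n+1) :=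
        Nat.choose_succ_succ _ _
      have h2 : (2*n+1).choose n = (2*n+1).choose (n+1) := by
        rw [← Nat.choose_symm (by omega : n + 1 ≤ 2*n+1)]
        congr 1; omega
      omega
    have he := central_sq_even (n+1)
    rw [show 2*(n+1) = 2*n+2 by ring] at he
    rw [h2] at he
    -- he : (2n+3) * (2 * C)^2 ≤ 16^(n+1)
    have : (2*n+1+1) * ((2*n+1).choose n)^2 * 4 ≤ 4^(2*n+1) * 4 := by
      calc (2*n+1+1) * ((2*n+1).choose n)^2 * 4 ≤ (2*n+3) * (2 * (2*n+1).choose n)^2 := by nlinarith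
        _ ≤ 16^(n+1) := he
        _ = 4^(2*n+1) * 4 := by rw [show (16:ℕ) = 4^2 by norm_num, ← pow_mul]; ring
    exact Nat.le_of_mul_le_mul_right this (by norm_num)



-- [axiom removed] -- imports from c2 (assume proven): nat_harmonic
-- [axiom removed] axiom nat_harmonic (B W k : ℕ) (hn : B + W = k + 3) :
--     (k+3) * (2 * ∑ j ∈ range W, (k+2).choose j)
--       = B * (∑ j ∈ range W, (k+3).choose j) + W * (∑ j ∈ range (W+1), (k+3).choose j)
-- [axiom removed] axiom sum_choose_le (M W : ℕ) (h : 2 * W ≤ M + 1) :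
--     (∑ j ∈ range W, M.choose j) ≤ W * M.choose W
-- 
noncomputable def hFun (B W : ℕ) : ℝ :=
  (∑ j ∈ range W, ((B + W - 1).choose j : ℝ)) / 2 ^ (B + W - 2)

lemma hFun_nonneg (B W : ℕ) : 0 ≤ hFun B W := by
  unfold hFun; positivity

lemma hFun_diag (W : ℕ) (hW : 1 ≤ W) : hFun W W = 1 := by
  obtain ⟨v, rfl⟩ : ∃ v, W = v + 1 := ⟨W - 1, by omega⟩
  unfold hFun
  have h1 : (v + 1) + (v + 1) - 1 = 2 * v + 1 := by omega
  have h2 : (v + 1) + (v + 1) - 2 = 2 * v := by omega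
  rw [h1, h2]
  have := Nat.sum_range_choose_halfway v
  have hcast : (∑ j ∈ range (v+1), ((2*v+1).choose j : ℝ)) = (4 : ℝ)^v := by
    rw [← Nat.cast_sum]
    rw [this]
    push_cast
    ring
  rw [hcast, show (4:ℝ)^v = 2^(2*v) by rw [show (4:ℝ) = 2^2 by norm_num, ← pow_mul]]
  exact div_self (by positivity)

lemma hFun_harmonic (B W : ℕ) (h3 : 3 ≤ B + W) :
    hFun B W = ((B : ℝ) / (B + W)) * hFun (B+1) W + ((W : ℝ) / (B + W)) * hFun B (W+1) := by
  obtain ⟨k, hk⟩ : ∃ k, B + W = k + 3 := ⟨B + W - 3, by omega⟩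
  unfold hFun
  have e1 : B + W - 1 = k + 2 := by omega
  have e2 : B + W - 2 = k + 1 := by omega
  have e3 : B + 1 + W - 1 = k + 3 := by omega
  have e4 : B + 1 + W - 2 = k + 2 := by omega
  have e5 : B + (W+1) - 1 = k + 3 := by omega
  have e6 : B + (W+1) - 2 = k + 2 := by omega
  rw [e1, e2, e3, e4, e5, e6]
  have hnat := nat_harmonic B W k hk
  have hcast := congrArg (Nat.cast : ℕ → ℝ) hnat
  push_cast at hcast
  set S1 : ℝ := ∑ j ∈ range W, ((k+2).choose j : ℝ) with hS1
  set S2 : ℝ := ∑ j ∈ range W, ((k+3).choose j : ℝ) with hS2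
  set S3 : ℝ := ∑ j ∈ range (W+1), ((k+3).choose j : ℝ) with hS3
  -- hcast : (k+3) * (2 * S1) = B * S2 + W * S3
  have hBW : (B : ℝ) + W = (k : ℝ) + 3 := by
    have := congrArg (Nat.cast : ℕ → ℝ) hk
    push_cast at this; linarith
  rw [hBW]
  have hk3 : (0:ℝ) < (k:ℝ) + 3 := by positivity
  have hp : (0:ℝ) < (2:ℝ)^(k+1) := by positivity
  field_simp
  ring_nf
  ring_nf at hcast
  linear_combination (2 * (2:ℝ)^k) * hcast

lemma hFun_le (B W : ℕ) (hWB : W ≤ B) :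
    hFun B W ≤ (W * ((B + W - 1).choose W : ℝ)) / 2 ^ (B + W - 2) := by
  unfold hFun
  gcongr
  have h := sum_choose_le (B + W - 1) W (by omega)
  calc (∑ j ∈ range W, ((B + W - 1).choose j : ℝ)) = ((∑ j ∈ range W, (B + W - 1).choose j : ℕ) : ℝ) := by
        push_cast; rfl
    _ ≤ ((W * (B + W - 1).choose W : ℕ) : ℝ) := by exact_mod_cast h
    _ = (W : ℝ) * ((B + W - 1).choose W : ℝ) := by push_cast; ring



/-- finset of boolean lists of length `N` -/
def paths : ℕ → Finset (List Bool)
  | 0 => {[]}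
  | (N+1) => ((paths N).image (· ++ [true])) ∪ ((paths N).image (· ++ [false]))

lemma mem_paths : ∀ {N : ℕ} {ε : List Bool}, ε ∈ paths N ↔ ε.length = N := by
  intro N
  induction N with
  | zero => intro ε; simp [paths, List.length_eq_zero_iff]
  | succ n ih =>
    intro ε
    simp only [paths, Finset.mem_union, Finset.mem_image]
    constructor
    · rintro (⟨a, ha, rfl⟩ | ⟨a, ha, rfl⟩) <;> simp [ih.1 ha]
    · intro hlen
      have hne : ε ≠ [] := by intro h; subst h; simp at hlen
      have hsplit : ε = ε.dropLast ++ [ε.getLast hne] := (List.dropLast_append_getLast hne).symm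
      have hdl : ε.dropLast ∈ paths n := ih.2 (by
        rw [List.length_dropLast, hlen]; rfl)
      rcases Bool.dichotomy (ε.getLast hne) with h | h
      · right; exact ⟨ε.dropLast, hdl, by rw [← h]; exact hsplit.symm⟩
      · left; exact ⟨ε.dropLast, hdl, by rw [← h]; exact hsplit.symm⟩

lemma append_single_injOn (x : Bool) : Function.Injective (fun ε : List Bool => ε ++ [x]) := by
  intro a b h
  simpa using (List.append_inj h (by have := congrArg List.length h; simpa using this)).1

lemma paths_disj (N : ℕ) :
    Disjoint ((paths N).image (· ++ [true])) ((paths N).image (· ++ [false])) := by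
  rw [Finset.disjoint_left]
  rintro a ha hb
  simp only [Finset.mem_image] at ha hb
  obtain ⟨l1, -, h1⟩ := ha
  obtain ⟨l2, -, h2⟩ := hb
  rw [← h2] at h1
  have := (List.append_inj h1 (by have := congrArg List.length h1; simpa using this)).2
  simp at this

lemma sum_paths_succ {M : Type*} [AddCommMonoid M] (N : ℕ) (g : List Bool → M) :
    ∑ ε ∈ paths (N+1), g ε = ∑ ε ∈ paths N, (g (ε ++ [true]) + g (ε ++ [false])) := by
  rw [show paths (N+1) = ((paths N).image (· ++ [true])) ∪ ((paths N).image (· ++ [false])) from rfl]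
  rw [Finset.sum_union (paths_disj N), Finset.sum_image (fun a _ b _ h => append_single_injOn true h),
    Finset.sum_image (fun a _ b _ h => append_single_injOn false h), Finset.sum_add_distrib]

lemma cons_injective (x : Bool) : Function.Injective (fun ε : List Bool => x :: ε) := by
  intro a b h; simpa using h

lemma paths_succ_cons (N : ℕ) :
    paths (N+1) = ((paths N).image (true :: ·)) ∪ ((paths N).image (false :: ·)) := by
  ext ε
  simp only [mem_paths, Finset.mem_union, Finset.mem_image]
  constructor
  · intro hlen
    cases ε with
    | nil => simp at hlen
    | cons a t =>
      rcases Bool.dichotomy a with h | h <;> subst h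
      · right; exact ⟨t, by simpa using hlen, rfl⟩
      · left; exact ⟨t, by simpa using hlen, rfl⟩
  · rintro (⟨a, ha, rfl⟩ | ⟨a, ha, rfl⟩) <;> simp [ha]

/-- the walk hits equality at some time along `ε` -/
def hits (b w : ℕ) (ε : List Bool) : Prop :=
  ∃ n ∈ Finset.range (ε.length + 1),
    b + (ε.take n).count true = w + (ε.take n).count false

instance (b w : ℕ) (ε : List Bool) : Decidable (hits b w ε) := by
  unfold hits; infer_instance

lemma hits_nil (b w : ℕ) : hits b w ([] : List Bool) ↔ b = w := by
  unfold hits; simp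

lemma hits_cons (b w : ℕ) (x : Bool) (ε : List Bool) :
    hits b w (x :: ε) ↔ b = w ∨ hits (b + (if x = true then 1 else 0)) (w + (if x = true then 0 else 1)) ε := by
  unfold hits
  constructor
  · rintro ⟨n, hn, he⟩
    cases n with
    | zero => left; simpa using he
    | succ m =>
      right
      refine ⟨m, by simp only [Finset.mem_range] at *; simpa using hn, ?_⟩
      rw [List.take_succ_cons] at he
      cases x <;> simp only [List.count_cons] at he ⊢ <;> simp at he ⊢ <;> omega
  · rintro (h | ⟨n, hn, he⟩)
    · exact ⟨0, by simp, by simpa using h⟩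
    · refine ⟨n + 1, by simp only [Finset.mem_range] at *; simpa using hn, ?_⟩
      rw [List.take_succ_cons]
      cases x <;> simp only [List.count_cons] at he ⊢ <;> simp at he ⊢ <;> omega

lemma hits_append_last (b w : ℕ) (x : Bool) (ε : List Bool) :
    hits b w (ε ++ [x]) ↔ hits b w ε ∨
      (b + (ε ++ [x]).count true = w + (ε ++ [x]).count false) := by
  unfold hits
  constructor
  · rintro ⟨n, hn, he⟩
    rcases le_or_gt n ε.length with h | h
    · left
      refine ⟨n, by simp only [Finset.mem_range]; omega, ?_⟩
      rwa [List.take_append_of_le_length h] at he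
    · right
      have hlen : (ε ++ [x]).length ≤ n := by simp; simp at hn; omega
      rwa [List.take_of_length_le hlen] at he
  · rintro (⟨n, hn, he⟩ | h)
    · refine ⟨n, by simp only [Finset.mem_range] at *; simp; omega, ?_⟩
      rw [List.take_append_of_le_length (by simp at hn; omega)]
      exact he
    · exact ⟨(ε ++ [x]).length, by simp, by rwa [List.take_of_length_le le_rfl]⟩

lemma notHit_lt : ∀ (ε : List Bool) (b w : ℕ), w < b → ¬ hits b w ε →
    w + ε.count false < b + ε.count true := by
  intro ε
  induction ε with
  | nil => intro b w hlt _; simpa using hlt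
  | cons x t ih =>
    intro b w hlt h
    rw [hits_cons] at h
    push_neg at h
    obtain ⟨-, h2⟩ := h
    cases x with
    | true =>
      have := ih (b+1) w (by omega) (by simpa using h2)
      simp only [List.count_cons] at *
      simp at *
      omega
    | false =>
      have hb : b ≠ w + 1 := by
        intro hcon
        exact h2 ⟨0, by simp, by simpa using hcon⟩
      have := ih b (w+1) (by omega) (by simpa using h2)
      simp only [List.count_cons] at *
      simp at *
      omega

lemma card_notHit_le : ∀ (N b w : ℕ), w < b →
    ((paths N).filter fun ε => ¬ hits b w ε).card ≤ FF N (b - w) := by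
  intro N
  induction N with
  | zero =>
    intro b w hlt
    have : (paths 0).filter (fun ε => ¬ hits b w ε) ⊆ {[]} := by
      intro ε hε
      simp only [Finset.mem_filter, paths] at hε
      simpa using hε.1
    calc _ ≤ ({[]} : Finset (List Bool)).card := Finset.card_le_card this
      _ = 1 := rfl
      _ ≤ FF 0 (b - w) := FF_one_pos _ (by omega)
  | succ n ih =>
    intro b w hlt
    rw [paths_succ_cons, Finset.filter_union]
    have hcard := Finset.card_union_le
      (((paths n).image (true :: ·)).filter fun ε => ¬ hits b w ε)
      (((paths n).image (false :: ·)).filter fun ε => ¬ hits b w ε)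
    apply le_trans hcard
    have htrue : (((paths n).image (true :: ·)).filter fun ε => ¬ hits b w ε).card
        ≤ FF n (b - w + 1) := by
      rw [Finset.filter_image, Finset.card_image_of_injective _ (cons_injective true)]
      have : ((paths n).filter fun ε => ¬ hits b w (true :: ε))
          = (paths n).filter fun ε => ¬ hits (b+1) w ε := by
        apply Finset.filter_congr
        intro ε _
        rw [hits_cons]
        simp only [if_true, if_false]
        constructor
        · intro h; push_neg at h; simpa using h.2
        · intro h; push_neg; exact ⟨by omega, by simpa using h⟩
      rw [this]
      have := ih (b+1) w (by omega)
      rwa [show b + 1 - w = b - w + 1 by omega] at this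
    have hfalse : (((paths n).image (false :: ·)).filter fun ε => ¬ hits b w ε).card
        ≤ FF n (b - w - 1) := by
      rw [Finset.filter_image, Finset.card_image_of_injective _ (cons_injective false)]
      rcases Nat.eq_or_lt_of_le (by omega : w + 1 ≤ b) with heq | hlt2
      · -- b = w + 1 : filter is empty
        have : ((paths n).filter fun ε => ¬ hits b w (false :: ε)) = ∅ := by
          apply Finset.filter_false_of_mem
          intro ε _
          rw [not_not, hits_cons]
          right
          exact ⟨0, by simp, by simp; omega⟩
        simp [this]
      · have : ((paths n).filter fun ε => ¬ hits b w (false :: ε))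
            = (paths n).filter fun ε => ¬ hits b (w+1) ε := by
          apply Finset.filter_congr
          intro ε _
          rw [hits_cons]
          norm_num
          intro _; omega
        rw [this]
        have := ih b (w+1) (by omega)
        rwa [show b - (w+1) = b - w - 1 by omega] at this
    calc _ ≤ FF n (b - w + 1) + FF n (b - w - 1) := Nat.add_le_add htrue hfalse
      _ = FF (n+1) (b - w) := (FF_rec n (b - w) (by omega)).symm



variable {Ω : Type*} [MeasurableSpace Ω] (P : Measure Ω) [IsProbabilityMeasure P]
  (X : ℕ → Ω → Bool) (b w : ℕ)

lemma mem_drawsEq_iff (ω : Ω) (ε : List Bool) :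
    ω ∈ drawsEq X ε ↔ ∀ (i : ℕ) (h : i < ε.length), X i ω = ε[i] := by
  show List.ofFn _ = ε ↔ _
  rw [List.ext_get_iff]
  simp only [List.length_ofFn, List.get_eq_getElem]
  constructor
  · rintro ⟨-, h⟩ i hi
    have := h i (by simpa using hi) hi
    rwa [List.getElem_ofFn] at this
  · intro h
    refine ⟨trivial, fun i h1 h2 => ?_⟩
    rw [List.getElem_ofFn]
    exact h i h2

lemma measurableSet_drawsEq (hm : ∀ i, Measurable (X i)) (ε : List Bool) :
    MeasurableSet (drawsEq X ε) := by
  have : drawsEq X ε = ⋂ i : Fin ε.length, (X i) ⁻¹' {ε[(i:ℕ)]} := by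
    ext ω
    rw [mem_drawsEq_iff]
    simp only [Set.mem_iInter, Set.mem_preimage, Set.mem_singleton_iff]
    exact ⟨fun h i => h i i.2, fun h i hi => h ⟨i, hi⟩⟩
  rw [this]
  exact MeasurableSet.iInter fun i => (hm i) (measurableSet_singleton _)

lemma drawsEq_nil : drawsEq X ([] : List Bool) = Set.univ := by
  ext ω; simp [drawsEq]

lemma drawsEq_append (ε : List Bool) (x : Bool) :
    drawsEq X (ε ++ [x]) = drawsEq X ε ∩ (X ε.length) ⁻¹' {x} := by
  ext ω
  rw [Set.mem_inter_iff, mem_drawsEq_iff, mem_drawsEq_iff]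
  simp only [Set.mem_preimage, Set.mem_singleton_iff, List.length_append, List.length_singleton]
  constructor
  · intro h
    refine ⟨fun i hi => ?_, ?_⟩
    · have := h i (by omega)
      rwa [List.getElem_append_left hi] at this
    · have := h ε.length (by omega)
      simpa using this
  · rintro ⟨h1, h2⟩ i hi
    rcases Nat.lt_or_ge i ε.length with h | h
    · rw [List.getElem_append_left h]
      exact h1 i h
    · have hieq : i = ε.length := by omega
      subst hieq
      simpa using h2

lemma drawsEq_disjoint {ε₁ ε₂ : List Bool} (hlen : ε₁.length = ε₂.length) (hne : ε₁ ≠ ε₂) :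
    Disjoint (drawsEq X ε₁) (drawsEq X ε₂) := by
  rw [Set.disjoint_left]
  intro ω h1 h2
  rw [mem_drawsEq_iff] at h1 h2
  apply hne
  rw [List.ext_get_iff]
  refine ⟨hlen, fun i hi1 hi2 => ?_⟩
  simp only [List.get_eq_getElem]
  rw [← h1 i hi1, ← h2 i hi2]

/-- ω belongs to the cylinder of its own first N draws -/
lemma mem_own_draws (ω : Ω) (N : ℕ) :
    ω ∈ drawsEq X (List.ofFn fun i : Fin N => X i ω) := by
  rw [mem_drawsEq_iff]
  intro i h
  have hi : i < N := by simpa using h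
  rw [List.getElem_ofFn]



-- [axiom removed] axiom measurableSet_drawsEq {Ω : Type*} [MeasurableSpace Ω] (X : ℕ → Ω → Bool)
--     (hm : ∀ i, Measurable (X i)) (ε : List Bool) : MeasurableSet (drawsEq X ε)
-- [axiom removed] axiom drawsEq_nil' {Ω : Type*} (X : ℕ → Ω → Bool) : drawsEq X ([] : List Bool) = Set.univ
-- [axiom removed] axiom drawsEq_append {Ω : Type*} (X : ℕ → Ω → Bool) (ε : List Bool) (x : Bool) :
--     drawsEq X (ε ++ [x]) = drawsEq X ε ∩ (X ε.length) ⁻¹' {x}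
-- 
lemma count_tf (ε : List Bool) : ε.count true + ε.count false = ε.length := by
  induction ε with
  | nil => rfl
  | cons a t ih => cases a <;> simp [List.count_cons] <;> omega



noncomputable def pp (ε : List Bool) : ℝ := (P (drawsEq X ε)).toReal

lemma pp_nonneg (ε : List Bool) : 0 ≤ pp P X ε := ENNReal.toReal_nonneg

lemma pp_nil : pp P X ([] : List Bool) = 1 := by
  unfold pp
  rw [drawsEq_nil (X := X), measure_univ, ENNReal.toReal_one]

lemma pp_true (hX : IsPolyaUrn P X b w) (ε : List Bool) :
    pp P X (ε ++ [true]) =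
      (((b : ℝ) + ε.count true) / ((b : ℝ) + w + ε.length)) * pp P X ε := by
  unfold pp
  rw [hX.2 ε, ENNReal.toReal_mul, ENNReal.toReal_ofReal
    (div_nonneg (by positivity) (by positivity))]

lemma pp_add (hX : IsPolyaUrn P X b w) (ε : List Bool) :
    pp P X (ε ++ [true]) + pp P X (ε ++ [false]) = pp P X ε := by
  unfold pp
  rw [drawsEq_append X ε true, drawsEq_append X ε false]
  rw [← ENNReal.toReal_add (measure_ne_top _ _) (measure_ne_top _ _)]
  congr 1
  rw [← measure_union]
  · congr 1
    ext ω
    simp only [Set.mem_union, Set.mem_inter_iff, Set.mem_preimage, Set.mem_singleton_iff]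
    rcases Bool.dichotomy (X ε.length ω) with h | h
    · constructor
      · rintro (⟨h1, -⟩ | ⟨h1, -⟩) <;> exact h1
      · intro h1; right; exact ⟨h1, h⟩
    · constructor
      · rintro (⟨h1, -⟩ | ⟨h1, -⟩) <;> exact h1
      · intro h1; left; exact ⟨h1, h⟩
  · apply Set.disjoint_left.2
    rintro ω ⟨-, h1⟩ ⟨-, h2⟩
    simp only [Set.mem_preimage, Set.mem_singleton_iff] at h1 h2
    rw [h1] at h2; simp at h2
  · exact ((measurableSet_drawsEq X hX.1 ε).inter ((hX.1 ε.length) (measurableSet_singleton _)))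

lemma pp_false (hX : IsPolyaUrn P X b w) (hb : 1 ≤ b) (ε : List Bool) :
    pp P X (ε ++ [false]) =
      (((w : ℝ) + ε.count false) / ((b : ℝ) + w + ε.length)) * pp P X ε := by
  have hadd := pp_add P X b w hX ε
  have htrue := pp_true P X b w hX ε
  have hden : ((b : ℝ) + w + ε.length) ≠ 0 := by positivity
  have hcnt : (ε.count true : ℝ) + (ε.count false : ℝ) = (ε.length : ℝ) := by
    exact_mod_cast congrArg (Nat.cast (R := ℝ)) (count_tf ε)
  have : pp P X (ε ++ [false]) = pp P X ε - pp P X (ε ++ [true]) := by linarith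
  rw [this, htrue]
  field_simp
  ring_nf
  nlinarith [hcnt, pp_nonneg P X ε]





lemma pp_inv (hX : IsPolyaUrn P X b w) (hb : 1 ≤ b) (hw : 1 ≤ w) : ∀ ε : List Bool,
    pp P X ε * (((w + ε.count false : ℕ) : ℝ) *
      (((b + w + ε.length - 1).choose (w + ε.count false) : ℕ) : ℝ))
      = (w : ℝ) * (((b + w - 1).choose w : ℕ) : ℝ) := by
  intro ε
  induction ε using List.reverseRecOn with
  | nil => simp [pp_nil P X]
  | append_singleton ε x ih =>
    have hlen : (ε ++ [x]).length = ε.length + 1 := by simp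
    set B : ℕ := b + ε.count true with hB
    set W : ℕ := w + ε.count false with hW
    set M : ℕ := b + w + ε.length - 1 with hM
    have hMW : M + 1 - W = B := by
      have := count_tf ε
      omega
    have hM1 : (M : ℕ) + 1 = b + w + ε.length := by omega
    have hden : ((b:ℝ) + w + ε.length) = ((M : ℝ) + 1) := by
      exact_mod_cast congrArg (Nat.cast (R := ℝ)) hM1.symm
    have hMpos : (0:ℝ) < (M:ℝ) + 1 := by positivity
    cases x with
    | true =>
      have hcf : (ε ++ [true]).count false = ε.count false := by
        simp [List.count_append]
      have hct : (ε ++ [true]).count true = ε.count true + 1 := by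
        simp [List.count_append]
      rw [pp_true P X b w hX ε, hcf, hlen]
      have hMnew : b + w + (ε.length + 1) - 1 = M + 1 := by omega
      rw [hMnew]
      -- goal: (B/(M+1)) * pp ε * (W * C(M+1, W)) = w * C(b+w-1,w)
      have hnat : (B : ℝ) * ((M+1).choose W : ℝ) = ((M:ℝ)+1) * (M.choose W : ℝ) := by
        have h := Nat.choose_mul_succ_eq M W
        -- h : M.choose W * (M + 1) = (M+1).choose W * (M + 1 - W)
        rw [hMW] at h
        have := congrArg (Nat.cast (R := ℝ)) h
        push_cast at this
        linarith
      have hBr : ((b:ℝ) + (ε.count true : ℝ)) = (B : ℝ) := by push_cast [hB]; ring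
      rw [hBr, hden]
      calc (B:ℝ) / ((M:ℝ)+1) * pp P X ε * ((W:ℝ) * (((M+1).choose W : ℕ) : ℝ))
          = pp P X ε * (W:ℝ) * ((B:ℝ) * (((M+1).choose W : ℕ):ℝ)) / ((M:ℝ)+1) := by ring
        _ = pp P X ε * (W:ℝ) * (((M:ℝ)+1) * ((M.choose W : ℕ):ℝ)) / ((M:ℝ)+1) := by rw [hnat]
        _ = pp P X ε * ((W:ℝ) * ((M.choose W : ℕ):ℝ)) := by field_simp
        _ = (w:ℝ) * (((b+w-1).choose w : ℕ):ℝ) := ih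
    | false =>
      have hcf : (ε ++ [false]).count false = ε.count false + 1 := by
        simp [List.count_append]
      rw [pp_false P X b w hX hb ε, hcf, hlen]
      have hMnew : b + w + (ε.length + 1) - 1 = M + 1 := by omega
      rw [hMnew]
      have hWnew : w + (ε.count false + 1) = W + 1 := by omega
      rw [hWnew]
      have hnat : ((W:ℝ)+1) * (((M+1).choose (W+1) : ℕ) : ℝ) = ((M:ℝ)+1) * ((M.choose W : ℕ) : ℝ) := by
        have h := Nat.add_one_mul_choose_eq M W
        -- h : (M+1) * M.choose W = (M+1).choose (W+1) * (W+1)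
        have := congrArg (Nat.cast (R := ℝ)) h
        push_cast at this
        linarith
      have hWr : ((w:ℝ) + (ε.count false : ℝ)) = (W : ℝ) := by push_cast [hW]; ring
      rw [hWr, hden]
      calc (W:ℝ) / ((M:ℝ)+1) * pp P X ε * (((W:ℕ)+1 : ℕ) * (((M+1).choose (W+1) : ℕ) : ℝ))
          = pp P X ε * (W:ℝ) * ((((W:ℝ)+1) * (((M+1).choose (W+1) : ℕ):ℝ))) / ((M:ℝ)+1) := by
            push_cast; ring
        _ = pp P X ε * (W:ℝ) * (((M:ℝ)+1) * ((M.choose W : ℕ):ℝ)) / ((M:ℝ)+1) := by rw [hnat]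
        _ = pp P X ε * ((W:ℝ) * ((M.choose W : ℕ):ℝ)) := by field_simp
        _ = (w:ℝ) * (((b+w-1).choose w : ℕ):ℝ) := ih



lemma count_ofFn : ∀ (N : ℕ) (g : Fin N → Bool) (x : Bool),
    (List.ofFn g).count x = (Finset.univ.filter fun i => g i = x).card := by
  intro N
  induction N with
  | zero => intro g x; simp
  | succ n ih =>
    intro g x
    rw [List.ofFn_succ, List.count_cons, ih (fun i => g i.succ) x]
    rw [Finset.card_filter, Finset.card_filter, Fin.sum_univ_succ]
    by_cases h : g 0 = x <;> simp [h, beq_iff_eq] <;> omega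

lemma take_ofFn (N n : ℕ) (hn : n ≤ N) (Y : ℕ → Bool) :
    (List.ofFn fun i : Fin N => Y i).take n = List.ofFn (fun i : Fin n => Y i) := by
  rw [List.ext_get_iff]
  constructor
  · simp [Nat.min_eq_left hn]
  · intro i h1 h2
    simp only [List.get_eq_getElem, List.getElem_take, List.getElem_ofFn]

lemma count_take_eq (Y : ℕ → Bool) (N n : ℕ) (hn : n ≤ N) (x : Bool) :
    ((List.ofFn fun i : Fin N => Y i).take n).count x
      = ((Finset.range n).filter fun i => Y i = x).card := by
  rw [take_ofFn N n hn Y, count_ofFn n _ x]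
  rw [Finset.card_filter, Finset.card_filter, Fin.sum_univ_eq_sum_range (fun i => if Y i = x then 1 else 0) n]

lemma count_full_eq (Y : ℕ → Bool) (N : ℕ) (x : Bool) :
    (List.ofFn fun i : Fin N => Y i).count x
      = ((Finset.range N).filter fun i => Y i = x).card := by
  have := count_take_eq Y N N le_rfl x
  rwa [List.take_of_length_le (by simp)] at this


section MainSection

variable {Ω : Type*} [MeasurableSpace Ω] (P : Measure Ω) [IsProbabilityMeasure P]
  (X : ℕ → Ω → Bool) (b w : ℕ)

/-- stopped value process summed over all length-`N` histories -/
noncomputable def SS (N : ℕ) : ℝ :=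
  ∑ ε ∈ paths N, pp P X ε *
    (if hits b w ε then 1 else hFun (b + ε.count true) (w + ε.count false))

lemma SS_zero (hbw : w < b) : SS P X b w 0 = hFun b w := by
  unfold SS
  rw [show paths 0 = {[]} from rfl, Finset.sum_singleton]
  rw [if_neg (by rw [hits_nil]; omega), pp_nil P X]
  simp

lemma SS_succ (hX : IsPolyaUrn P X b w) (hbw : w < b) (hw : 1 ≤ w) (N : ℕ) :
    SS P X b w (N+1) = SS P X b w N := by
  unfold SS
  rw [sum_paths_succ]
  apply Finset.sum_congr rfl
  intro ε hε
  by_cases hh : hits b w ε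
  · rw [if_pos hh, if_pos ((hits_append_last b w true ε).2 (Or.inl hh)),
      if_pos ((hits_append_last b w false ε).2 (Or.inl hh))]
    rw [mul_one, mul_one, mul_one, pp_add P X b w hX]
  · rw [if_neg hh]
    have hctT : (ε ++ [true]).count true = ε.count true + 1 := by simp [List.count_append]
    have hcfT : (ε ++ [true]).count false = ε.count false := by simp [List.count_append]
    have hctF : (ε ++ [false]).count true = ε.count true := by simp [List.count_append]
    have hcfF : (ε ++ [false]).count false = ε.count false + 1 := by simp [List.count_append]
    set B : ℕ := b + ε.count true with hB
    set W : ℕ := w + ε.count false with hW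
    have hW1 : 1 ≤ W := by omega
    have hTstate : b + (ε ++ [true]).count true = B + 1 := by omega
    have hFstate : w + (ε ++ [false]).count false = W + 1 := by omega
    have hT : (if hits b w (ε ++ [true]) then (1:ℝ)
        else hFun (b + (ε ++ [true]).count true) (w + (ε ++ [true]).count false))
        = hFun (B+1) W := by
      rw [hcfT, hTstate, ← hW]
      by_cases hht : hits b w (ε ++ [true])
      · rw [if_pos hht]
        rcases (hits_append_last b w true ε).1 hht with h | h
        · exact absurd h hh
        · rw [hcfT, hctT] at h
          have : B + 1 = W := by omega
          rw [this, hFun_diag W hW1]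
      · rw [if_neg hht]
    have hF : (if hits b w (ε ++ [false]) then (1:ℝ)
        else hFun (b + (ε ++ [false]).count true) (w + (ε ++ [false]).count false))
        = hFun B (W+1) := by
      rw [hctF, hFstate, ← hB]
      by_cases hhf : hits b w (ε ++ [false])
      · rw [if_pos hhf]
        rcases (hits_append_last b w false ε).1 hhf with h | h
        · exact absurd h hh
        · rw [hcfF, hctF] at h
          have : B = W + 1 := by omega
          rw [this, hFun_diag (W+1) (by omega)]
      · rw [if_neg hhf]
    rw [hT, hF]
    rw [pp_true P X b w hX ε, pp_false P X b w hX (by omega) ε]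
    have hBW : ((b:ℝ) + w + ε.length) = ((B:ℝ) + W) := by
      have := count_tf ε
      push_cast [hB, hW]
      have : (ε.count true : ℝ) + (ε.count false : ℝ) = (ε.length : ℝ) := by
        exact_mod_cast congrArg (Nat.cast (R := ℝ)) (count_tf ε)
      linarith
    have hBr : ((b:ℝ) + (ε.count true : ℝ)) = (B : ℝ) := by push_cast [hB]; ring
    have hWr : ((w:ℝ) + (ε.count false : ℝ)) = (W : ℝ) := by push_cast [hW]; ring
    rw [hBW, hBr, hWr]
    have hharm := hFun_harmonic B W (by omega)
    calc (B:ℝ) / ((B:ℝ) + W) * pp P X ε * hFun (B+1) W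
        + (W:ℝ) / ((B:ℝ) + W) * pp P X ε * hFun B (W+1)
        = pp P X ε * (((B:ℝ) / ((B:ℝ)+W)) * hFun (B+1) W
            + ((W:ℝ) / ((B:ℝ)+W)) * hFun B (W+1)) := by ring
      _ = pp P X ε * hFun B W := by rw [← hharm]

lemma SS_const (hX : IsPolyaUrn P X b w) (hbw : w < b) (hw : 1 ≤ w) (N : ℕ) :
    SS P X b w N = hFun b w := by
  induction N with
  | zero => exact SS_zero P X b w hbw
  | succ n ih => rw [SS_succ P X b w hX hbw hw n, ih]

lemma SS_split (N : ℕ) : SS P X b w N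
    = (∑ ε ∈ (paths N).filter (fun ε => hits b w ε), pp P X ε)
      + ∑ ε ∈ (paths N).filter (fun ε => ¬ hits b w ε),
          pp P X ε * hFun (b + ε.count true) (w + ε.count false) := by
  unfold SS
  rw [← Finset.sum_filter_add_sum_filter_not (paths N) (fun ε => hits b w ε)]
  congr 1
  · apply Finset.sum_congr rfl
    intro ε hε
    rw [if_pos (Finset.mem_filter.1 hε).2, mul_one]
  · apply Finset.sum_congr rfl
    intro ε hε
    rw [if_neg (Finset.mem_filter.1 hε).2]

lemma remainder_le (hX : IsPolyaUrn P X b w) (hbw : w < b) (hw : 1 ≤ w) (N : ℕ) :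
    (∑ ε ∈ (paths N).filter (fun ε => ¬ hits b w ε),
        pp P X ε * hFun (b + ε.count true) (w + ε.count false))
      ≤ (((b - w : ℕ) : ℝ) * (N.choose (N/2) : ℝ)) *
          (((w : ℝ) * (((b+w-1).choose w : ℕ) : ℝ)) / 2 ^ (b + w + N - 2)) := by
  set K : ℝ := ((w : ℝ) * (((b+w-1).choose w : ℕ) : ℝ)) / 2 ^ (b + w + N - 2) with hK
  have hKnn : 0 ≤ K := by positivity
  have hperpath : ∀ ε ∈ (paths N).filter (fun ε => ¬ hits b w ε),
      pp P X ε * hFun (b + ε.count true) (w + ε.count false) ≤ K := by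
    intro ε hε
    rw [Finset.mem_filter] at hε
    obtain ⟨hεp, hnh⟩ := hε
    have hlen : ε.length = N := mem_paths.1 hεp
    set B : ℕ := b + ε.count true with hB
    set W : ℕ := w + ε.count false with hW
    have hWB : W < B := notHit_lt ε b w hbw hnh
    have hBWlen : B + W = b + w + N := by
      have := count_tf ε; omega
    have h1 : hFun B W ≤ ((W : ℝ) * (((B + W - 1).choose W : ℕ) : ℝ)) / 2 ^ (B + W - 2) :=
      hFun_le B W (le_of_lt hWB)
    have h2 : pp P X ε * hFun B W
        ≤ pp P X ε * (((W : ℝ) * (((B + W - 1).choose W : ℕ) : ℝ)) / 2 ^ (B + W - 2)) :=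
      mul_le_mul_of_nonneg_left h1 (pp_nonneg P X ε)
    apply h2.trans
    have h3 : pp P X ε * (((W : ℝ) * (((B + W - 1).choose W : ℕ) : ℝ)) / 2 ^ (B + W - 2))
        = (pp P X ε * ((W : ℝ) * (((B + W - 1).choose W : ℕ) : ℝ))) / 2 ^ (B + W - 2) := by
      ring
    rw [h3]
    have hinv := pp_inv P X b w hX (by omega) hw ε
    have hM : b + w + ε.length - 1 = B + W - 1 := by omega
    rw [hM] at hinv
    rw [show pp P X ε * ((W : ℝ) * (((B + W - 1).choose W : ℕ) : ℝ))
        = pp P X ε * (((w + ε.count false : ℕ) : ℝ) * (((B + W - 1).choose (w + ε.count false) : ℕ) : ℝ)) by push_cast [hW]; ring]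
    rw [hinv, hK]
    have : B + W - 2 = b + w + N - 2 := by omega
    rw [this]
  calc (∑ ε ∈ (paths N).filter (fun ε => ¬ hits b w ε),
        pp P X ε * hFun (b + ε.count true) (w + ε.count false))
      ≤ ∑ _ε ∈ (paths N).filter (fun ε => ¬ hits b w ε), K := Finset.sum_le_sum hperpath
    _ = (((paths N).filter (fun ε => ¬ hits b w ε)).card : ℝ) * K := by
        rw [Finset.sum_const, nsmul_eq_mul]
    _ ≤ (((b - w) * (N.choose (N/2)) : ℕ) : ℝ) * K := by
        apply mul_le_mul_of_nonneg_right _ hKnn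
        have := (card_notHit_le N b w hbw).trans (FF_le N (b - w))
        exact_mod_cast this
    _ = (((b - w : ℕ) : ℝ) * (N.choose (N/2) : ℝ)) * K := by push_cast; ring

/-- hitting event by time `N` -/
def hitEvtN (N : ℕ) : Set Ω :=
  {ω | ∃ n, n ≤ N ∧ blackCount X b n ω = whiteCount X w n ω}

lemma hitEvtN_eq (N : ℕ) : hitEvtN X b w N
    = ⋃ ε ∈ (paths N).filter (fun ε => hits b w ε), drawsEq X ε := by
  ext ω
  simp only [hitEvtN, Set.mem_setOf_eq, Set.mem_iUnion, Finset.mem_filter, exists_prop]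
  constructor
  · rintro ⟨n, hn, heq⟩
    refine ⟨List.ofFn (fun i : Fin N => X i ω), ⟨mem_paths.2 (by simp), ?_⟩, mem_own_draws X ω N⟩
    refine ⟨n, by simp only [Finset.mem_range, List.length_ofFn]; omega, ?_⟩
    rw [count_take_eq (fun i => X i ω) N n hn true, count_take_eq (fun i => X i ω) N n hn false]
    exact heq
  · rintro ⟨ε, ⟨hεp, hεh⟩, hω⟩
    have hlen : ε.length = N := mem_paths.1 hεp
    obtain ⟨n, hn, he⟩ := hεh
    rw [Finset.mem_range] at hn
    have hεeq : ε = List.ofFn (fun i : Fin N => X i ω) := by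
      have : List.ofFn (fun i : Fin ε.length => X (i : ℕ) ω) = ε := hω
      rw [← this]
      subst hlen
      rfl
    refine ⟨n, by omega, ?_⟩
    unfold blackCount whiteCount
    rw [← count_take_eq (fun i => X i ω) N n (by omega) true,
      ← count_take_eq (fun i => X i ω) N n (by omega) false]
    rw [← hεeq]
    exact he

lemma P_hitEvtN (hm : ∀ i, Measurable (X i)) (N : ℕ) :
    (P (hitEvtN X b w N)).toReal
      = ∑ ε ∈ (paths N).filter (fun ε => hits b w ε), pp P X ε := by
  rw [hitEvtN_eq]
  rw [measure_biUnion_finset ?_ (fun ε _ => measurableSet_drawsEq X hm ε)]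
  · rw [ENNReal.toReal_sum (fun ε _ => measure_ne_top P _)]
    rfl
  · intro ε₁ h1 ε₂ h2 hne
    simp only [Finset.coe_filter, Set.mem_setOf_eq] at h1 h2
    exact drawsEq_disjoint X (by rw [mem_paths.1 h1.1, mem_paths.1 h2.1]) hne

end MainSection

end PolyaAux

/-- The equalization probability of a Pólya urn started with `b > w ≥ 1` balls equals
`(1/2^(b+w-2)) · Σ_{j=0}^{w-1} C(b+w-1, j)`. -/
theorem polya_equalization_prob_binomial {Ω : Type*} [MeasurableSpace Ω] (P : Measure Ω)
    [IsProbabilityMeasure P] (X : ℕ → Ω → Bool) (b w : ℕ)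
    (hbw : b > w) (hw : 1 ≤ w) (hX : IsPolyaUrn P X b w) :
    P {ω | ∃ n, blackCount X b n ω = whiteCount X w n ω} =
      ENNReal.ofReal ((1 / 2 ^ (b + w - 2)) *
        ∑ j ∈ Finset.range w, ((b + w - 1).choose j : ℝ)) := by
  classical
  have hm : ∀ i, Measurable (X i) := hX.1
  have hb1 : 1 ≤ b := by omega
  have hset : {ω | ∃ n, blackCount X b n ω = whiteCount X w n ω}
      = ⋃ N, PolyaAux.hitEvtN X b w N := by
    ext ω
    simp only [Set.mem_setOf_eq, Set.mem_iUnion, PolyaAux.hitEvtN]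
    constructor
    · rintro ⟨n, h⟩; exact ⟨n, n, le_rfl, h⟩
    · rintro ⟨N, n, -, h⟩; exact ⟨n, h⟩
  have hmono : Monotone (PolyaAux.hitEvtN X b w) := by
    intro i j hij ω hω
    obtain ⟨n, hn, h⟩ := hω
    exact ⟨n, hn.trans hij, h⟩
  have htend1 : Filter.Tendsto (fun N => P (PolyaAux.hitEvtN X b w N)) Filter.atTop
      (nhds (P (⋃ N, PolyaAux.hitEvtN X b w N))) :=
    MeasureTheory.tendsto_measure_iUnion_atTop hmono
  have htop : P (⋃ N, PolyaAux.hitEvtN X b w N) ≠ ⊤ := measure_ne_top P _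
  have htend2 : Filter.Tendsto (fun N => (P (PolyaAux.hitEvtN X b w N)).toReal) Filter.atTop
      (nhds ((P (⋃ N, PolyaAux.hitEvtN X b w N)).toReal)) :=
    (ENNReal.tendsto_toReal htop).comp htend1
  set R : ℕ → ℝ := fun N => ∑ ε ∈ (PolyaAux.paths N).filter (fun ε => ¬ PolyaAux.hits b w ε),
      PolyaAux.pp P X ε * PolyaAux.hFun (b + ε.count true) (w + ε.count false) with hRdef
  have hPR : ∀ N, (P (PolyaAux.hitEvtN X b w N)).toReal = PolyaAux.hFun b w - R N := by
    intro N
    have h1 := PolyaAux.SS_const P X b w hX hbw hw N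
    have h2 := PolyaAux.SS_split P X b w N
    have h3 := PolyaAux.P_hitEvtN P X b w hm N
    rw [h3]
    rw [h1] at h2
    rw [hRdef]
    linarith
  have hR0 : ∀ N, 0 ≤ R N := by
    intro N
    apply Finset.sum_nonneg
    intro ε _
    exact mul_nonneg (PolyaAux.pp_nonneg P X ε) (PolyaAux.hFun_nonneg _ _)
  have hRle : ∀ N, R N ≤ (((b - w : ℕ) : ℝ) * (N.choose (N/2) : ℝ)) *
      (((w : ℝ) * (((b+w-1).choose w : ℕ) : ℝ)) / 2 ^ (b + w + N - 2)) :=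
    fun N => PolyaAux.remainder_le P X b w hX hbw hw N
  -- the bound tends to zero
  have hxtend : Filter.Tendsto (fun N : ℕ => ((N.choose (N/2) : ℕ) : ℝ) / 2 ^ N)
      Filter.atTop (nhds 0) := by
    have hnn : ∀ N : ℕ, 0 ≤ ((N.choose (N/2) : ℕ) : ℝ) / 2 ^ N := by
      intro N; positivity
    have hub : ∀ N : ℕ, ((N.choose (N/2) : ℕ) : ℝ) / 2 ^ N ≤ Real.sqrt (1 / (N + 1)) := by
      intro N
      have hc := PolyaAux.central_sq N
      have hcast : ((N:ℝ)+1) * ((N.choose (N/2) : ℕ) : ℝ)^2 ≤ 4 ^ N := by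
        exact_mod_cast hc
      have h4 : (4 : ℝ) ^ N = (2 ^ N) ^ 2 := by
        rw [show (4:ℝ) = 2^2 by norm_num, ← pow_mul, mul_comm, pow_mul]
      have hsq : (((N.choose (N/2) : ℕ) : ℝ) / 2 ^ N)^2 ≤ 1/((N:ℝ)+1) := by
        rw [div_pow, ← h4]
        rw [div_le_div_iff₀ (by positivity) (by positivity)]
        nlinarith [hcast]
      calc ((N.choose (N/2) : ℕ) : ℝ) / 2 ^ N
          = Real.sqrt ((((N.choose (N/2) : ℕ) : ℝ) / 2 ^ N)^2) := (Real.sqrt_sq (hnn N)).symm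
        _ ≤ Real.sqrt (1/((N:ℝ)+1)) := Real.sqrt_le_sqrt hsq
    have hsq : Filter.Tendsto (fun N : ℕ => Real.sqrt (1 / (N + 1))) Filter.atTop (nhds 0) := by
      have h1 : Filter.Tendsto (fun N : ℕ => 1 / ((N : ℝ) + 1)) Filter.atTop (nhds 0) :=
        tendsto_one_div_add_atTop_nhds_zero_nat
      have h2 : Filter.Tendsto Real.sqrt (nhds 0) (nhds 0) := by
        have := Real.continuous_sqrt.tendsto 0
        rwa [Real.sqrt_zero] at this
      exact h2.comp h1
    exact tendsto_of_tendsto_of_tendsto_of_le_of_le tendsto_const_nhds hsq hnn hub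
  have hbound : Filter.Tendsto (fun N : ℕ => (((b - w : ℕ) : ℝ) * (N.choose (N/2) : ℝ)) *
      (((w : ℝ) * (((b+w-1).choose w : ℕ) : ℝ)) / 2 ^ (b + w + N - 2))) Filter.atTop (nhds 0) := by
    have hre : ∀ N : ℕ, (((b - w : ℕ) : ℝ) * (N.choose (N/2) : ℝ)) *
        (((w : ℝ) * (((b+w-1).choose w : ℕ) : ℝ)) / 2 ^ (b + w + N - 2))
        = (((b - w : ℕ) : ℝ) * ((w : ℝ) * (((b+w-1).choose w : ℕ) : ℝ)) / 2 ^ (b + w - 2))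
          * (((N.choose (N/2) : ℕ) : ℝ) / 2 ^ N) := by
      intro N
      have he : b + w + N - 2 = (b + w - 2) + N := by omega
      rw [he, pow_add]
      push_cast
      field_simp
    rw [show (0:ℝ) = (((b - w : ℕ) : ℝ) * ((w : ℝ) * (((b+w-1).choose w : ℕ) : ℝ)) / 2 ^ (b + w - 2)) * 0 by ring]
    exact Filter.Tendsto.congr (fun N => (hre N).symm) (Filter.Tendsto.const_mul _ hxtend)
  have hRtend : Filter.Tendsto R Filter.atTop (nhds 0) :=
    tendsto_of_tendsto_of_tendsto_of_le_of_le tendsto_const_nhds hbound hR0 hRle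
  have htend3 : Filter.Tendsto (fun N => (P (PolyaAux.hitEvtN X b w N)).toReal) Filter.atTop
      (nhds (PolyaAux.hFun b w)) := by
    have : Filter.Tendsto (fun N => PolyaAux.hFun b w - R N) Filter.atTop
        (nhds (PolyaAux.hFun b w - 0)) := Filter.Tendsto.const_sub _ hRtend
    rw [sub_zero] at this
    exact Filter.Tendsto.congr (fun N => (hPR N).symm) this
  have hlim : (P (⋃ N, PolyaAux.hitEvtN X b w N)).toReal = PolyaAux.hFun b w :=
    tendsto_nhds_unique htend2 htend3
  rw [hset, ← ENNReal.ofReal_toReal htop, hlim]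
  congr 1
  unfold PolyaAux.hFun
  push_cast
  ring
end

section
/- For integers b, w ≥ 1 and x ∈ [0,1], the probability that a Beta(b, w)-distributed random variable is at most x equals the probability that a Binomial(b+w−1, x) random variable is at least b; equivalently, ∫_0^x Γ(b+w)/(Γ(b)Γ(w)) p^{b-1}(1-p)^{w-1} dp = Σ_{j=b}^{b+w-1} C(b+w-1, j) x^j (1-x)^{b+w-1-j}. -/
open MeasureTheory ProbabilityTheory Filter

/-!
The upper binomial tail `∑_{j ≥ b} C(n,j) x^j (1-x)^(n-j)` is a sum of Bernstein polynomials
`B_{n,j}`, and `B_{n,j}' = n (B_{n-1,j-1} - B_{n-1,j})`, so its derivative telescopes to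
`n B_{n-1,b-1}(x) = n C(n-1,b-1) x^(b-1) (1-x)^(n-b)`. With `n = b + w - 1` this is the Beta(b,w)
density, since `Γ(b+w) / (Γ(b) Γ(w)) = n C(n-1,b-1)`. The tail vanishes at `0`, so it is the
integral of the density from `0`.
-/

open Finset Polynomial
open scoped Nat

noncomputable def bernsteinTail (R : Type*) [CommRing R] (n b : ℕ) : R[X] :=
  ∑ j ∈ Icc b n, bernsteinPolynomial R n j

namespace bernsteinTail

variable {R : Type*} [CommRing R]

theorem derivative_succ (n k : ℕ) :
    derivative (bernsteinTail R n (k + 1)) = n * bernsteinPolynomial R (n - 1) k := by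
  rcases n.eq_zero_or_pos with rfl | hn
  · simp [bernsteinTail]
  rcases le_or_gt k n with hk | hk
  · have htop : bernsteinPolynomial R (n - 1) n = 0 :=
      bernsteinPolynomial.eq_zero_of_lt R (by omega)
    have telescope : ∑ i ∈ Ico k n,
        (bernsteinPolynomial R (n - 1) i - bernsteinPolynomial R (n - 1) (i + 1)) =
          bernsteinPolynomial R (n - 1) k := by
      simpa only [neg_sub_neg, htop, neg_zero, zero_sub, neg_neg] using
        sum_Ico_sub (fun i => -bernsteinPolynomial R (n - 1) i) hk
    rw [bernsteinTail, derivative_sum, ← Ico_add_one_right_eq_Icc, ← sum_Ico_add']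
    simp only [bernsteinPolynomial.derivative_succ, ← mul_sum, telescope]
  · rw [bernsteinTail, Icc_eq_empty (by omega), bernsteinPolynomial.eq_zero_of_lt R (by omega)]
    simp

theorem eval_zero (n k : ℕ) : (bernsteinTail R n (k + 1)).eval 0 = 0 := by
  simp [bernsteinTail, eval_finsetSum, bernsteinPolynomial.eval_at_0]

theorem eval_eq_sum (n b : ℕ) (x : R) :
    (bernsteinTail R n b).eval x = ∑ j ∈ Icc b n, (n.choose j : R) * x ^ j * (1 - x) ^ (n - j) := by
  simp [bernsteinTail, eval_finsetSum, bernsteinPolynomial]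

end bernsteinTail

theorem Polynomial.integral_Ioo_eval_derivative (P : ℝ[X]) {a x : ℝ} (h : a ≤ x) :
    ∫ p in Set.Ioo a x, P.derivative.eval p = P.eval x - P.eval a := by
  rw [← integral_Ioc_eq_integral_Ioo, ← intervalIntegral.integral_of_le h]
  exact intervalIntegral.integral_eq_sub_of_hasDerivAt (fun y _ => P.hasDerivAt y)
    (P.derivative.continuous.intervalIntegrable _ _)

theorem Real.Gamma_nat_add_div_Gamma_mul_Gamma (k m : ℕ) :
    Real.Gamma (k + 1 + (m + 1)) / (Real.Gamma (k + 1) * Real.Gamma (m + 1)) =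
      (k + m + 1 : ℕ) * ((k + m).choose k : ℝ) := by
  have hfact : (k + m + 1) ! = (k + m + 1) * (k + m).choose k * (k ! * m !) := by
    have h := Nat.choose_mul_factorial_mul_factorial (Nat.le_add_right k m)
    rw [Nat.add_sub_cancel_left] at h
    rw [Nat.factorial_succ, ← h]; ring
  rw [show (k + 1 + (m + 1) : ℝ) = (k + m + 1 : ℕ) + 1 by push_cast; ring,
    Real.Gamma_nat_eq_factorial, Real.Gamma_nat_eq_factorial, Real.Gamma_nat_eq_factorial,
    div_eq_iff (by positivity), hfact]
  push_cast; ring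

theorem betaDensity_succ_succ (k m : ℕ) (p : ℝ) :
    betaDensity (k + 1) (m + 1) p = (derivative (bernsteinTail ℝ (k + m + 1) (k + 1))).eval p := by
  rw [betaDensity, bernsteinTail.derivative_succ]
  push_cast
  simp only [Real.Gamma_nat_add_div_Gamma_mul_Gamma, Nat.cast_add, Nat.cast_one, bernsteinPolynomial,
    add_tsub_cancel_left, eval_mul, eval_add, eval_natCast, eval_one, eval_pow, eval_X, eval_sub]
  ring

/-- The Beta(b,w) CDF at `x` equals the probability that a Binomial(b+w−1, x)
random variable is at least `b`. -/
theorem beta_cdf_eq_binomial_tail (b w : ℕ) (hb : 1 ≤ b) (hw : 1 ≤ w)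
    (x : ℝ) (hx : x ∈ Set.Icc (0 : ℝ) 1) :
    ∫ p in Set.Ioo (0 : ℝ) x,
        Real.Gamma (b + w) / (Real.Gamma b * Real.Gamma w) * p ^ (b - 1) * (1 - p) ^ (w - 1) =
      ∑ j ∈ Finset.Icc b (b + w - 1),
        ((b + w - 1).choose j : ℝ) * x ^ j * (1 - x) ^ (b + w - 1 - j) := by
  obtain ⟨k, rfl⟩ := Nat.exists_eq_add_of_le' hb
  obtain ⟨m, rfl⟩ := Nat.exists_eq_add_of_le' hw
  change ∫ p in Set.Ioo 0 x, betaDensity (k + 1) (m + 1) p = _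
  rw [show k + 1 + (m + 1) - 1 = k + m + 1 by omega]
  simp_rw [betaDensity_succ_succ, Polynomial.integral_Ioo_eval_derivative _ hx.1,
    bernsteinTail.eval_zero, sub_zero, bernsteinTail.eval_eq_sum]
end

section
/- For a Pólya urn started with b black and w white balls with b > w ≥ 1, let S_n = B_n − W_n and Z = lim_n B_n/(b+w+n). If Z < 1/2, then almost surely there exists n with S_n = 0; that is, {Z < 1/2} ⊆ {∃ n, B_n = W_n} up to a null set. -/
open MeasureTheory ProbabilityTheory Filter

/-!
The argument is pathwise. Since `Bₙ + Wₙ = b + w + n`, the fraction `Bₙ / (b + w + n)` tending to a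
limit below `1/2` forces `Bₙ < Wₙ` for some `n`. The difference `Bₙ - Wₙ` starts at `b - w ≥ 0`
and drops by at most one per draw, so on its way below zero it passes through zero.
-/

theorem Int.exists_eq_of_le_of_lt_of_sub_one_le {f : ℕ → ℤ} (hf : ∀ n, f n - 1 ≤ f (n + 1))
    {c : ℤ} (h0 : c ≤ f 0) {N : ℕ} (hN : f N < c) : ∃ n, f n = c := by
  induction N with
  | zero => omega
  | succ N ih =>
    by_cases hlt : f N < c
    · exact ih hlt
    · exact ⟨N, by have := hf N; omega⟩

section Urn

variable {Ω : Type*} (X : ℕ → Ω → Bool) (b w : ℕ) (ω : Ω)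

theorem blackCount_add_whiteCount (n : ℕ) :
    blackCount X b n ω + whiteCount X w n ω = b + w + n := by
  have hsplit := Finset.card_filter_add_card_filter_not (s := Finset.range n)
    (p := fun i => X i ω = true)
  simp only [Bool.not_eq_true, Finset.card_range] at hsplit
  simp only [blackCount, whiteCount]
  omega

theorem blackCount_mono : Monotone fun n => blackCount X b n ω := fun _ _ hmn =>
  Nat.add_le_add_left (Finset.card_le_card
    (Finset.filter_subset_filter _ (Finset.range_subset_range.mpr hmn))) b

theorem exists_blackCount_lt_whiteCount_of_tendsto {z : ℝ} (hz : z < 1 / 2)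
    (hlim : Tendsto (fun n => (blackCount X b n ω : ℝ) / ((b : ℝ) + w + n)) atTop (nhds z)) :
    ∃ n, blackCount X b n ω < whiteCount X w n ω := by
  obtain ⟨n, hn, hn1⟩ := ((hlim.eventually_lt_const hz).and (eventually_ge_atTop 1)).exists
  refine ⟨n, ?_⟩
  have hpos : (0 : ℝ) < b + w + n := by
    have : (1 : ℝ) ≤ n := by exact_mod_cast hn1
    positivity
  have htot : (blackCount X b n ω : ℝ) + whiteCount X w n ω = b + w + n := by
    exact_mod_cast blackCount_add_whiteCount X b w ω n
  rw [div_lt_div_iff₀ hpos two_pos] at hn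
  exact_mod_cast (by linarith : (blackCount X b n ω : ℝ) < whiteCount X w n ω)

theorem exists_blackCount_eq_whiteCount (hwb : w ≤ b) {N : ℕ}
    (hN : blackCount X b N ω < whiteCount X w N ω) :
    ∃ n, blackCount X b n ω = whiteCount X w n ω := by
  -- `Bₙ - Wₙ = 2 Bₙ - (b + w + n)` with `Bₙ` nondecreasing, so each draw lowers it by at most one.
  have hstep (n : ℕ) : (blackCount X b n ω : ℤ) - whiteCount X w n ω - 1 ≤
      (blackCount X b (n + 1) ω : ℤ) - whiteCount X w (n + 1) ω := by
    have : blackCount X b n ω ≤ blackCount X b (n + 1) ω := blackCount_mono X b ω n.le_succ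
    have := blackCount_add_whiteCount X b w ω n
    have := blackCount_add_whiteCount X b w ω (n + 1)
    omega
  have h0 : (0 : ℤ) ≤ (blackCount X b 0 ω : ℤ) - whiteCount X w 0 ω := by
    simp [blackCount, whiteCount, hwb]
  obtain ⟨n, hn⟩ := Int.exists_eq_of_le_of_lt_of_sub_one_le hstep h0 (N := N) (by omega)
  exact ⟨n, by omega⟩

end Urn

theorem polya_lt_half_implies_equalization_general {Ω : Type*} [MeasurableSpace Ω] (P : Measure Ω)
    (X : ℕ → Ω → Bool) (b w : ℕ)
    (hbw : b > w)
    (Z : Ω → ℝ)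
    (hZ : ∀ᵐ ω ∂P, Tendsto (fun n => (blackCount X b n ω : ℝ) / ((b : ℝ) + w + n))
      atTop (nhds (Z ω))) :
    P ({ω | Z ω < 1 / 2} \ {ω | ∃ n, blackCount X b n ω = whiteCount X w n ω}) = 0 := by
  refine measure_mono_null ?_ (ae_iff.mp hZ)
  rintro ω ⟨hlt, hne⟩ hlim
  obtain ⟨N, hN⟩ := exists_blackCount_lt_whiteCount_of_tendsto X b w ω hlt hlim
  exact hne (exists_blackCount_eq_whiteCount X b w ω hbw.le hN)

/-- If the limiting black fraction is below 1/2 then equalization occurs: the event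
`{Z < 1/2}` is contained in `{∃ n, Bₙ = Wₙ}` up to a null set. -/
theorem polya_lt_half_implies_equalization {Ω : Type*} [MeasurableSpace Ω] (P : Measure Ω)
    [IsProbabilityMeasure P] (X : ℕ → Ω → Bool) (b w : ℕ)
    (hbw : b > w) (hw : 1 ≤ w) (hX : IsPolyaUrn P X b w)
    (Z : Ω → ℝ) (hZm : Measurable Z)
    (hZ : ∀ᵐ ω ∂P, Tendsto (fun n => (blackCount X b n ω : ℝ) / ((b : ℝ) + w + n))
      atTop (nhds (Z ω))) :
    P ({ω | Z ω < 1 / 2} \ {ω | ∃ n, blackCount X b n ω = whiteCount X w n ω}) = 0 :=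
  polya_lt_half_implies_equalization_general P X b w hbw Z hZ
end
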